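/- arXiv:math/0012198 — 7 statements merged into one kernel-verified Lean document; each statement's English description precedes it below -/
import Mathlib

section
/- Let G be a simple graph on vertices {v_1,…,v_n} and let G* be the cone over G, obtained by adding a new vertex v_0 together with an edge from v_0 to each v_i (so G* is connected). Then for every field K there is a bijection between the set {x ∈ K^{E(G*)} : Q_{G*}(x) ≠ 0} and the set Z^o_G(K). -/
attribute [local instance] Classical.propDecidable

/-- The polynomial `Q_H = Σ_T ∏_{e ∈ T} x_e`, where `T` ranges over all spanning trees
of `H`, with one variable for each edge of `H`. -/
noncomputable def QG {V : Type} [Fintype V] [DecidableEq V] (H : SimpleGraph V) :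
    MvPolynomial H.edgeSet ℤ :=
  ∑ T ∈ Finset.univ.filter (fun T : SimpleGraph V => T ≤ H ∧ T.IsTree),
    ∏ e ∈ Finset.univ.filter (fun e : H.edgeSet => (e : Sym2 V) ∈ T.edgeSet),
      MvPolynomial.X e

/-- The cone `G*` over `G`: a new apex vertex (`none`) is joined by an edge to every
vertex of `G`, and two old vertices are adjacent iff they are adjacent in `G`. -/
def cone {n : ℕ} (G : SimpleGraph (Fin n)) : SimpleGraph (Option (Fin n)) :=
  SimpleGraph.fromRel (fun x y =>
    x = none ∨ ∃ i j : Fin n, x = some i ∧ y = some j ∧ G.Adj i j)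

/-- `Z^o_G(K)`: the set of invertible symmetric `n × n` matrices `M` over `K` such that
`M i j = 0` whenever `i ≠ j` and `{v_i, v_j}` is not an edge of `G`. -/
def ZoG {n : ℕ} (G : SimpleGraph (Fin n)) (K : Type) [Field K] :
    Set (Matrix (Fin n) (Fin n) K) :=
  {M | M.det ≠ 0 ∧ M.IsSymm ∧ ∀ i j : Fin n, i ≠ j → ¬ G.Adj i j → M i j = 0}

/-!
Let `N` be the signed edge-vertex incidence matrix of `G*` with the apex column deleted. The
map `x ↦ Nᵀ diag(x) N` is the reduced weighted Laplacian: its off-diagonal entries are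
`-x_{ij}` (zero off `G`) and its row sums are the apex weights `x_{0i}`, so it is a bijection
from `K^{E(G*)}` onto the symmetric matrices supported on `G`. By Cauchy–Binet its
determinant is the sum, over the sets `S` of `n` edges, of `det(N_S)² ∏_{e ∈ S} x_e`. If `S`
spans a tree, walks from the apex give an integral left inverse of `N_S`, so `det(N_S)² = 1`;
otherwise `S`, having `n` edges on `n + 1` vertices, is disconnected, and the indicator of the
vertices cut off from the apex lies in the kernel of `N_S`. Hence the determinant is
`Q_{G*}(x)` (the weighted matrix-tree theorem), and the bijection restricts as claimed.
-/

open Finset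

theorem Finset.sum_filter_image_eq_sum_perm {m ι M : Type*} [Fintype m] [DecidableEq m]
    [Fintype ι] [DecidableEq ι] [AddCommMonoid M] (S : Finset ι) (e : m ≃ S)
    (F : (m → ι) → M) :
    ∑ g ∈ univ.filter (fun g : m → ι => univ.image g = S), F g
      = ∑ σ : Equiv.Perm m, F (fun i => e (σ i)) := by
  symm
  refine sum_bij (fun σ _ i => (e (σ i) : ι)) (fun σ _ => ?_) (fun σ _ τ _ h => ?_)
    (fun g hg => ?_) (fun _ _ => rfl)
  · simp only [mem_filter, mem_univ, true_and]
    ext a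
    simp only [mem_image, mem_univ, true_and]
    exact ⟨fun ⟨i, hi⟩ => hi ▸ (e (σ i)).2,
      fun ha => ⟨σ.symm (e.symm ⟨a, ha⟩), by simp⟩⟩
  · ext i
    exact e.injective (Subtype.ext (congrFun h i))
  · have himg : univ.image g = S := (mem_filter.mp hg).2
    let g' : m → S := fun i => ⟨g i, himg ▸ mem_image_of_mem g (mem_univ i)⟩
    have hg' : g'.Bijective := by
      refine (Fintype.bijective_iff_surjective_and_card g').mpr
        ⟨fun a => ?_, Fintype.card_congr e⟩
      obtain ⟨i, -, hi⟩ := mem_image.mp (himg ▸ a.2 : (a : ι) ∈ univ.image g)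
      exact ⟨i, Subtype.ext hi⟩
    exact ⟨(Equiv.ofBijective g' hg').trans e.symm, mem_univ _, by ext; simp [g']⟩

namespace Matrix

variable {m ι R : Type*} [Fintype m] [DecidableEq m] [Fintype ι] [CommRing R]

theorem det_mul_eq_sum_det_submatrix_mul_prod (A : Matrix m ι R) (B : Matrix ι m R) :
    (A * B).det = ∑ g : m → ι, (A.submatrix id g).det * ∏ i, B (g i) i := by
  simp only [det_apply', mul_apply, prod_univ_sum, mul_sum, Fintype.piFinset_univ,
    submatrix_apply, id, sum_mul, ← prod_mul_distrib, mul_assoc]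
  exact sum_comm

theorem sum_filter_image_det_submatrix_mul_prod [DecidableEq ι] (A : Matrix m ι R)
    (B : Matrix ι m R) (S : Finset ι) (e : m ≃ S) :
    ∑ g ∈ univ.filter (fun g : m → ι => univ.image g = S),
        (A.submatrix id g).det * ∏ i, B (g i) i
      = (A.submatrix id (fun i => e i)).det * (B.submatrix (fun i => e i) id).det := by
  rw [sum_filter_image_eq_sum_perm S e, det_apply' (B.submatrix _ id), mul_sum]
  refine sum_congr rfl fun σ _ => ?_
  rw [show A.submatrix id (fun i => (e (σ i) : ι))
      = (A.submatrix id (fun i => e i)).submatrix id σ from rfl, det_permute']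
  simp only [submatrix_apply, id]
  ring

theorem sum_filter_image_det_submatrix_mul_prod_of_card_ne [DecidableEq ι] (A : Matrix m ι R)
    (B : Matrix ι m R) {S : Finset ι} (hS : #S ≠ Fintype.card m) :
    ∑ g ∈ univ.filter (fun g : m → ι => univ.image g = S),
        (A.submatrix id g).det * ∏ i, B (g i) i = 0 := by
  refine sum_eq_zero fun g hg => ?_
  have hg' : ¬ g.Injective := fun hg' => hS <| by
    rw [← (mem_filter.mp hg).2, card_image_of_injective _ hg', card_univ]
  obtain ⟨i, j, hgij, hij⟩ := Function.not_injective_iff.mp hg'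
  rw [det_zero_of_column_eq hij fun k => by simp [hgij], zero_mul]

theorem det_mul_eq_sum_det_mul_det [DecidableEq ι] (A : Matrix m ι R) (B : Matrix ι m R)
    (e : ∀ S : {S : Finset ι // #S = Fintype.card m}, m ≃ S.1) :
    (A * B).det = ∑ S : {S : Finset ι // #S = Fintype.card m},
      (A.submatrix id (fun i => e S i)).det * (B.submatrix (fun i => e S i) id).det := by
  rw [det_mul_eq_sum_det_submatrix_mul_prod, ← sum_fiberwise univ (fun g => univ.image g),
    ← sum_filter_of_ne (p := fun S => #S = Fintype.card m) fun S _ h =>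
      not_not.mp fun hS => h (sum_filter_image_det_submatrix_mul_prod_of_card_ne A B hS),
    sum_subtype (p := fun S => #S = Fintype.card m) _ (by simp)]
  exact sum_congr rfl fun S _ => sum_filter_image_det_submatrix_mul_prod A B S (e S)

theorem eq_of_offDiag_eq_of_sum_row_eq {R : Type*} [AddCommGroup R] {A B : Matrix m m R}
    (hoff : ∀ i j, i ≠ j → A i j = B i j) (hsum : ∀ i, ∑ j, A i j = ∑ j, B i j) :
    A = B := by
  ext i j
  obtain rfl | hij := eq_or_ne i j
  · have := hsum i
    rw [← add_sum_erase _ _ (mem_univ i), ← add_sum_erase _ _ (mem_univ i),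
      sum_congr rfl fun j hj => hoff i j (ne_of_mem_erase hj).symm] at this
    exact add_right_cancel this
  · exact hoff i j hij

end Matrix

theorem Sym2.out_mk_eq_or {V : Type*} (u v : V) :
    s(u, v).out = (u, v) ∨ s(u, v).out = (v, u) := by
  rcases Sym2.eq_iff.mp (Quot.out_eq s(u, v) : s(s(u, v).out.1, s(u, v).out.2) = s(u, v))
    with ⟨h1, h2⟩ | ⟨h1, h2⟩
  · exact .inl (Prod.ext h1 h2)
  · exact .inr (Prod.ext h1 h2)

section SignedIncidence

variable {V : Type*} [DecidableEq V]

/-- The orientation of `e`, from `e.out.2` to `e.out.1`, is arbitrary: reversing an edge changes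
signs only in ways that cancel in `Nᵀ diag(x) N` and in `det(N_S)²`. -/
noncomputable def signedIncidence (e : Sym2 V) (v : V) : ℤ :=
  (if v = e.out.1 then 1 else 0) - (if v = e.out.2 then 1 else 0)

theorem signedIncidence_mk (u v a : V) :
    signedIncidence s(u, v) a
      = signedIncidence s(u, v) v * ((if a = v then 1 else 0) - (if a = u then 1 else 0)) := by
  unfold signedIncidence
  rcases Sym2.out_mk_eq_or u v with h | h <;> rw [h] <;> dsimp only <;> split_ifs <;> simp_all

theorem signedIncidence_mk_mul_self {u v : V} (h : u ≠ v) :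
    signedIncidence s(u, v) v * signedIncidence s(u, v) v = 1 := by
  unfold signedIncidence
  rcases Sym2.out_mk_eq_or u v with h' | h' <;> rw [h'] <;> simp [h.symm]

theorem signedIncidence_mk_mul {u v : V} (h : u ≠ v) (a : V) :
    signedIncidence s(u, v) v * signedIncidence s(u, v) a
      = (if a = v then 1 else 0) - (if a = u then 1 else 0) := by
  rw [signedIncidence_mk u v a, ← mul_assoc, signedIncidence_mk_mul_self h, one_mul]

theorem signedIncidence_eq_zero_of_notMem {e : Sym2 V} {a : V} (ha : a ∉ e) :
    signedIncidence e a = 0 := by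
  induction e using Sym2.ind with
  | _ u v =>
    rw [Sym2.mem_iff, not_or] at ha
    simp [signedIncidence_mk u v a, ha.1, ha.2]

theorem signedIncidence_mul_signedIncidence {a b : V} (h : a ≠ b) (e : Sym2 V) :
    signedIncidence e a * signedIncidence e b = if e = s(a, b) then -1 else 0 := by
  split_ifs with he
  · rw [he, mul_comm, signedIncidence_mk_mul h]
    simp [h]
  · have : a ∉ e ∨ b ∉ e := by
      by_contra! hab
      exact he ((Sym2.mem_and_mem_iff h).mp hab)
    rcases this with ha | hb
    · rw [signedIncidence_eq_zero_of_notMem ha, zero_mul]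
    · rw [signedIncidence_eq_zero_of_notMem hb, mul_zero]

theorem sum_signedIncidence_mul {R : Type*} [CommRing R] [Fintype V] (u v : V) (f : V → R) :
    ∑ a, (signedIncidence s(u, v) a : R) * f a = signedIncidence s(u, v) v * (f v - f u) := by
  calc ∑ a, (signedIncidence s(u, v) a : R) * f a
      = ∑ a, (signedIncidence s(u, v) v : R)
          * ((if a = v then f a else 0) - (if a = u then f a else 0)) :=
        sum_congr rfl fun a _ => by
          rw [signedIncidence_mk u v a]
          split_ifs <;> push_cast <;> ring
    _ = signedIncidence s(u, v) v * (f v - f u) := by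
        rw [← mul_sum, sum_sub_distrib, sum_ite_eq', sum_ite_eq']
        simp

theorem sum_signedIncidence [Fintype V] (e : Sym2 V) : ∑ a, signedIncidence e a = 0 := by
  induction e using Sym2.ind with
  | _ u v => simpa using sum_signedIncidence_mul (R := ℤ) u v 1

end SignedIncidence

section Flow

variable {V : Type*} [DecidableEq V] {T : SimpleGraph V}

noncomputable def walkFlow {u v : V} (p : T.Walk u v) (ε : Sym2 V) : ℤ :=
  (p.darts.map fun d => if d.edge = ε then signedIncidence ε d.snd else 0).sum

theorem walkFlow_cons {u u' v : V} (h : T.Adj u u') (q : T.Walk u' v) (ε : Sym2 V) :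
    walkFlow (.cons h q) ε
      = (if s(u, u') = ε then signedIncidence ε u' else 0) + walkFlow q ε :=
  rfl

theorem sum_walkFlow_mul_signedIncidence {u v : V} (p : T.Walk u v) {F : Finset (Sym2 V)}
    (hF : ∀ ε ∈ p.edges, ε ∈ F) (a : V) :
    ∑ ε ∈ F, walkFlow p ε * signedIncidence ε a
      = (if a = v then 1 else 0) - (if a = u then 1 else 0) := by
  induction p with
  | nil => simp [walkFlow]
  | @cons u u' v h q ih =>
    have hq : ∀ ε ∈ q.edges, ε ∈ F := fun ε hε => hF ε (by simp [hε])
    have huu' : s(u, u') ∈ F := hF _ (by simp)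
    simp only [walkFlow_cons, add_mul, sum_add_distrib, ih hq, ite_mul, zero_mul, sum_ite_eq,
      huu', if_true, signedIncidence_mk_mul h.ne]
    ring

end Flow

section Rooted

open Matrix

variable {W : Type*} [Fintype W] [DecidableEq W]

noncomputable def rootedIncidence {ι : Type*} (f : ι → Sym2 (Option W)) : Matrix ι W ℤ :=
  Matrix.of fun k w => signedIncidence (f k) (some w)

theorem isUnit_det_rootedIncidence {f : W → Sym2 (Option W)} (hf : f.Injective)
    (hconn : (SimpleGraph.fromEdgeSet (Set.range f)).Connected) :
    IsUnit (rootedIncidence f).det := by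
  let p : ∀ w, (SimpleGraph.fromEdgeSet (Set.range f)).Walk none (some w) :=
    fun w => (hconn.preconnected none (some w)).some
  refine isUnit_det_of_left_inverse (B := Matrix.of fun w k => walkFlow (p w) (f k)) ?_
  ext w w'
  have hF : ∀ ε ∈ (p w).edges, ε ∈ univ.image f := fun ε hε => by
    obtain ⟨⟨k, rfl⟩, -⟩ :=
      SimpleGraph.edgeSet_fromEdgeSet _ ▸ (p w).edges_subset_edgeSet hε
    exact mem_image_of_mem f (mem_univ k)
  have := sum_walkFlow_mul_signedIncidence (p w) hF (some w')
  rw [sum_image fun _ _ _ _ h => hf h] at this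
  simpa [mul_apply, rootedIncidence, one_apply, eq_comm] using this

theorem det_rootedIncidence_eq_zero {f : W → Sym2 (Option W)}
    (hconn : ¬(SimpleGraph.fromEdgeSet (Set.range f)).Connected) :
    (rootedIncidence f).det = 0 := by
  set T := SimpleGraph.fromEdgeSet (Set.range f)
  obtain ⟨a, ha⟩ : ∃ a, ¬T.Reachable none a := by
    by_contra! h
    exact hconn ((SimpleGraph.connected_iff_exists_forall_reachable T).mpr ⟨none, h⟩)
  obtain ⟨w₀, rfl⟩ : ∃ w, a = some w :=
    Option.ne_none_iff_exists'.mp (by rintro rfl; exact ha .rfl)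
  let χ : Option W → ℤ := fun a => if T.Reachable none a then 0 else 1
  refine exists_mulVec_eq_zero_iff.mp
    ⟨fun w => χ (some w), fun h => by simpa [χ, ha] using congrFun h w₀, ?_⟩
  ext k
  have hχ : (rootedIncidence f *ᵥ fun w => χ (some w)) k
      = ∑ a, signedIncidence (f k) a * χ a := by
    simp [mulVec, dotProduct, Fintype.sum_option, χ, rootedIncidence]
  rw [hχ, Pi.zero_apply]
  obtain ⟨u, v, huv⟩ : ∃ u v, f k = s(u, v) := Sym2.ind (fun u v => ⟨u, v, rfl⟩) (f k)
  have hreach : χ u = χ v := by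
    by_cases h : u = v
    · rw [h]
    · have hadj : T.Adj u v := ⟨⟨k, huv⟩, h⟩
      have : T.Reachable none u ↔ T.Reachable none v :=
        ⟨fun r => r.trans hadj.reachable, fun r => r.trans hadj.symm.reachable⟩
      simp only [χ, this]
  simpa [huv, hreach] using sum_signedIncidence_mul (R := ℤ) u v χ

theorem det_rootedIncidence_mul_self {f : W → Sym2 (Option W)} (hf : f.Injective)
    (hdiag : ∀ k, ¬(f k).IsDiag) :
    (rootedIncidence f).det * (rootedIncidence f).det
      = if (SimpleGraph.fromEdgeSet (Set.range f)).IsTree then 1 else 0 := by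
  have hcard : Nat.card (SimpleGraph.fromEdgeSet (Set.range f)).edgeSet + 1
      = Nat.card (Option W) := by
    rw [SimpleGraph.edgeSet_fromEdgeSet, sdiff_eq_left.mpr ?_, Nat.card_range_of_injective hf]
    · simp
    · exact Set.disjoint_left.mpr fun _ ⟨k, hk⟩ hd => hdiag k (hk ▸ hd)
  rw [SimpleGraph.isTree_iff_connected_and_card, and_iff_left hcard]
  split_ifs with hconn
  · rcases Int.isUnit_iff.mp (isUnit_det_rootedIncidence hf hconn) with h | h <;> rw [h] <;> rfl
  · rw [det_rootedIncidence_eq_zero hconn, mul_zero]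

end Rooted

section SpanningTrees

variable {V : Type} {H : SimpleGraph V}

theorem fromEdgeSet_image_filter_mem_edgeSet [Fintype V] {T : SimpleGraph V} (hT : T ≤ H) :
    SimpleGraph.fromEdgeSet (Subtype.val ''
      ((univ.filter fun e : H.edgeSet => (e : Sym2 V) ∈ T.edgeSet) : Set H.edgeSet)) = T := by
  convert SimpleGraph.fromEdgeSet_edgeSet T
  ext ε
  simp only [coe_filter, mem_univ, true_and, Set.mem_image, Set.mem_ofPred_eq, Subtype.exists,
    exists_and_right, exists_eq_right]
  exact ⟨fun ⟨_, h⟩ => h, fun h => ⟨SimpleGraph.edgeSet_mono hT h, h⟩⟩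

theorem filter_mem_edgeSet_fromEdgeSet_image [Fintype V] (S : Finset H.edgeSet) :
    (univ.filter fun e : H.edgeSet => (e : Sym2 V) ∈
      (SimpleGraph.fromEdgeSet (Subtype.val '' (S : Set H.edgeSet))).edgeSet) = S := by
  ext e
  simp [SimpleGraph.not_isDiag_of_mem_edgeSet H e.2]

theorem aeval_QG [Fintype V] [DecidableEq V] {K : Type*} [CommRing K] (x : H.edgeSet → K) :
    MvPolynomial.aeval x (QG H) = ∑ S : Finset H.edgeSet,
      if (SimpleGraph.fromEdgeSet (Subtype.val '' (S : Set H.edgeSet))).IsTree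
      then ∏ e ∈ S, x e else 0 := by
  rw [← sum_filter, QG, map_sum]
  simp only [map_prod, MvPolynomial.aeval_X]
  refine sum_nbij' (fun T => univ.filter fun e : H.edgeSet => (e : Sym2 V) ∈ T.edgeSet)
    (fun S => SimpleGraph.fromEdgeSet (Subtype.val '' (S : Set H.edgeSet)))
    (fun T hT => ?_) (fun S hS => ?_) (fun T hT => ?_) (fun S _ => ?_) (fun _ _ => rfl)
  · rw [mem_filter] at hT ⊢
    exact ⟨mem_univ _, (fromEdgeSet_image_filter_mem_edgeSet hT.2.1).symm ▸ hT.2.2⟩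
  · rw [mem_filter] at hS ⊢
    exact ⟨mem_univ _,
      fun u v ⟨⟨e, _, he⟩, _⟩ => (he ▸ e.2 : s(u, v) ∈ H.edgeSet), hS.2⟩
  · exact fromEdgeSet_image_filter_mem_edgeSet (mem_filter.mp hT).2.1
  · convert filter_mem_edgeSet_fromEdgeSet_image S

end SpanningTrees

section MatrixTree

open Matrix

variable {W : Type} [Fintype W] [DecidableEq W] (H : SimpleGraph (Option W)) {K : Type*}
  [CommRing K]

noncomputable def reducedIncidence : Matrix H.edgeSet W ℤ :=
  rootedIncidence ((↑) : H.edgeSet → Sym2 (Option W))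

noncomputable def reducedLaplacian (x : H.edgeSet → K) : Matrix W W K :=
  ((reducedIncidence H).map (Int.cast : ℤ → K))ᵀ * diagonal x
    * (reducedIncidence H).map (Int.cast : ℤ → K)

variable {H}

theorem card_eq_of_isTree {S : Finset H.edgeSet}
    (hS : (SimpleGraph.fromEdgeSet (Subtype.val '' (S : Set H.edgeSet))).IsTree) :
    #S = Fintype.card W := by
  have := (SimpleGraph.isTree_iff_connected_and_card.mp hS).2
  rw [SimpleGraph.edgeSet_fromEdgeSet, sdiff_eq_left.mpr ?_] at this
  · simpa [card_image_of_injective _ Subtype.val_injective] using this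
  · exact Set.disjoint_left.mpr fun _ ⟨e, _, he⟩ hd =>
      H.not_isDiag_of_mem_edgeSet e.2 (he ▸ hd)

theorem det_reducedLaplacian (x : H.edgeSet → K) :
    (reducedLaplacian H x).det = MvPolynomial.aeval x (QG H) := by
  rw [aeval_QG, ← sum_filter_of_ne (p := fun S => #S = Fintype.card W)
      fun S _ h => card_eq_of_isTree (not_not.mp fun hS => h (if_neg hS)),
    sum_subtype (p := fun S => #S = Fintype.card W) _ (by simp), reducedLaplacian,
    det_mul_eq_sum_det_mul_det _ _ fun S => Fintype.equivOfCardEq (by simp [S.2])]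
  refine sum_congr rfl fun S _ => ?_
  set e : W ≃ S.1 := Fintype.equivOfCardEq (by simp [S.2])
  set f : W → Sym2 (Option W) := fun i => ((e i : H.edgeSet) : Sym2 (Option W))
  have hA : (((reducedIncidence H).map (Int.cast : ℤ → K))ᵀ * diagonal x).submatrix id
      (fun i => e i)
      = ((rootedIncidence f).map (Int.cast : ℤ → K))ᵀ * diagonal fun i => x (e i) := by
    ext i j
    simp [mul_diagonal, rootedIncidence, reducedIncidence, f]
  have hB : ((reducedIncidence H).map (Int.cast : ℤ → K)).submatrix (fun i => e i) id
      = (rootedIncidence f).map (Int.cast : ℤ → K) := rfl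
  have hdet : ((rootedIncidence f).map (Int.cast : ℤ → K)).det = (rootedIncidence f).det :=
    ((Int.castRingHom K).map_det _).symm
  have hrange : Set.range f = Subtype.val '' (S.1 : Set H.edgeSet) := by
    ext ε
    constructor
    · rintro ⟨k, rfl⟩
      exact ⟨(e k).1, (e k).2, rfl⟩
    · rintro ⟨s, hs, rfl⟩
      exact ⟨e.symm ⟨s, hs⟩, by simp [f]⟩
  have hprod : ∏ i, x (e i) = ∏ s ∈ S.1, x s :=
    (Equiv.prod_comp e fun s : S.1 => x s).trans (prod_coe_sort S.1 x)
  rw [hA, hB, det_mul, det_transpose, det_diagonal, hdet, hprod, mul_right_comm, ← Int.cast_mul,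
    det_rootedIncidence_mul_self, hrange]
  · split_ifs <;> simp
  · exact Subtype.val_injective.comp (Subtype.val_injective.comp e.injective)
  · exact fun k => H.not_isDiag_of_mem_edgeSet (e k).1.2

theorem reducedLaplacian_apply (x : H.edgeSet → K) (i j : W) :
    reducedLaplacian H x i j = ∑ e : H.edgeSet,
      x e * (signedIncidence e.1 (some i) * signedIncidence e.1 (some j) : ℤ) := by
  rw [reducedLaplacian, mul_apply]
  refine sum_congr rfl fun e _ => ?_
  simp only [mul_diagonal, transpose_apply, map_apply, reducedIncidence, rootedIncidence,
    of_apply, Int.cast_mul]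
  ring

theorem sum_mul_signedIncidence_mul_of_ne {a b : Option W} (hab : a ≠ b) (x : H.edgeSet → K) :
    ∑ e : H.edgeSet, x e * (signedIncidence e.1 a * signedIncidence e.1 b : ℤ)
      = -(if h : s(a, b) ∈ H.edgeSet then x ⟨_, h⟩ else 0) := by
  simp_rw [signedIncidence_mul_signedIncidence hab]
  split_ifs with h
  · rw [sum_eq_single ⟨_, h⟩]
    · simp
    · intro e _ he
      rw [if_neg fun h' => he (Subtype.ext h'), Int.cast_zero, mul_zero]
    · simp
  · refine (sum_eq_zero fun e _ => ?_).trans neg_zero.symm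
    rw [if_neg fun h' : e.1 = s(a, b) => h (h' ▸ e.2), Int.cast_zero, mul_zero]

theorem reducedLaplacian_apply_of_ne (x : H.edgeSet → K) {i j : W} (hij : i ≠ j) :
    reducedLaplacian H x i j
      = -(if h : s(some i, some j) ∈ H.edgeSet then x ⟨_, h⟩ else 0) := by
  rw [reducedLaplacian_apply,
    sum_mul_signedIncidence_mul_of_ne (Option.some_injective _ |>.ne hij)]

theorem sum_reducedLaplacian_row (x : H.edgeSet → K) (i : W) :
    ∑ j, reducedLaplacian H x i j
      = if h : s(none, some i) ∈ H.edgeSet then x ⟨_, h⟩ else 0 := by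
  have hcol : ∀ e : H.edgeSet,
      ∑ j, signedIncidence e.1 (some j) = -signedIncidence e.1 none := by
    intro e
    have := sum_signedIncidence e.1
    rw [Fintype.sum_option] at this
    linarith
  simp_rw [reducedLaplacian_apply]
  rw [sum_comm]
  simp_rw [← mul_sum, ← Int.cast_sum, ← mul_sum, hcol, mul_neg, Int.cast_neg, mul_neg,
    sum_neg_distrib, sum_mul_signedIncidence_mul_of_ne (Option.some_ne_none i), Sym2.eq_swap,
    neg_neg]

theorem reducedLaplacian_isSymm (x : H.edgeSet → K) : (reducedLaplacian H x).IsSymm := by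
  simp [IsSymm, reducedLaplacian, transpose_mul, Matrix.mul_assoc]

end MatrixTree

section Cone

open Matrix

variable {n : ℕ} {G : SimpleGraph (Fin n)} {K : Type*} [CommRing K]

theorem mk_none_some_mem_edgeSet_cone (i : Fin n) : s(none, some i) ∈ (cone G).edgeSet := by
  simp [cone]

theorem mk_some_some_mem_edgeSet_cone {i j : Fin n} :
    s(some i, some j) ∈ (cone G).edgeSet ↔ G.Adj i j := by
  simp only [cone, SimpleGraph.mem_edgeSet, SimpleGraph.fromRel_adj, ne_eq, Option.some.injEq,
    reduceCtorEq, false_or, exists_and_left, exists_eq_left']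
  exact ⟨fun h => h.2.elim id fun h' => h'.symm, fun h => ⟨h.ne, .inl h⟩⟩

noncomputable def coneWeights (M : Matrix (Fin n) (Fin n) K) (hM : M.IsSymm) :
    Sym2 (Option (Fin n)) → K :=
  Sym2.lift ⟨fun a b => match a, b with
    | none, none => 0
    | none, some i | some i, none => ∑ j, M i j
    | some i, some j => -M i j, by
    rintro (_ | i) (_ | j) <;> simp [hM.apply]⟩

theorem reducedLaplacian_cone_coneWeights {M : Matrix (Fin n) (Fin n) K} (hM : M.IsSymm)
    (hG : ∀ i j, i ≠ j → ¬G.Adj i j → M i j = 0) :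
    reducedLaplacian (cone G) (fun e => coneWeights M hM e) = M := by
  refine eq_of_offDiag_eq_of_sum_row_eq (fun i j hij => ?_) fun i => ?_
  · rw [reducedLaplacian_apply_of_ne _ hij]
    by_cases hadj : G.Adj i j
    · rw [dif_pos (mk_some_some_mem_edgeSet_cone.mpr hadj)]
      simp [coneWeights]
    · rw [dif_neg (mt mk_some_some_mem_edgeSet_cone.mp hadj), neg_zero, hG i j hij hadj]
  · rw [sum_reducedLaplacian_row, dif_pos (mk_none_some_mem_edgeSet_cone i)]
    simp [coneWeights]

theorem coneWeights_reducedLaplacian (x : (cone G).edgeSet → K) (e : (cone G).edgeSet) :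
    coneWeights (reducedLaplacian (cone G) x) (reducedLaplacian_isSymm x) e = x e := by
  obtain ⟨e, he⟩ := e
  induction e using Sym2.ind with
  | _ u v =>
    rcases u with _ | i <;> rcases v with _ | j
    · exact ((cone G).loopless.irrefl none he).elim
    · simp only [coneWeights, Sym2.lift_mk]
      rw [sum_reducedLaplacian_row, dif_pos he]
    · simp only [coneWeights, Sym2.lift_mk]
      rw [sum_reducedLaplacian_row, dif_pos (Sym2.eq_swap ▸ he)]
      congr 1
      exact Subtype.ext Sym2.eq_swap
    · have hij : i ≠ j := by
        rintro rfl
        exact (cone G).loopless.irrefl _ he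
      simp only [coneWeights, Sym2.lift_mk]
      rw [reducedLaplacian_apply_of_ne _ hij, dif_pos he, neg_neg]

theorem reducedLaplacian_cone_eq_zero (x : (cone G).edgeSet → K) {i j : Fin n} (hij : i ≠ j)
    (hG : ¬G.Adj i j) : reducedLaplacian (cone G) x i j = 0 := by
  rw [reducedLaplacian_apply_of_ne _ hij, dif_neg (mt mk_some_some_mem_edgeSet_cone.mp hG),
    neg_zero]

end Cone

/-- For every simple graph `G` and every field `K`, there is a bijection between
`{x ∈ K^{E(G*)} : Q_{G*}(x) ≠ 0}` and `Z^o_G(K)`. -/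
theorem stmt_3 (n : ℕ) (G : SimpleGraph (Fin n)) (K : Type) [Field K] :
    Nonempty
      ({x : (cone G).edgeSet → K // (MvPolynomial.aeval x) (QG (cone G)) ≠ 0} ≃
        ZoG G K) :=
  ⟨{ toFun := fun x => ⟨reducedLaplacian (cone G) x.1,
        (det_reducedLaplacian x.1).symm ▸ x.2, reducedLaplacian_isSymm x.1,
        fun _ _ => reducedLaplacian_cone_eq_zero x.1⟩
     invFun := fun M => ⟨fun e => coneWeights M.1 M.2.2.1 e, by
        rw [← det_reducedLaplacian, reducedLaplacian_cone_coneWeights M.2.2.1 M.2.2.2]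
        exact M.2.1⟩
     left_inv := fun x => Subtype.ext (funext (coneWeights_reducedLaplacian x.1))
     right_inv := fun M => Subtype.ext (reducedLaplacian_cone_coneWeights M.2.2.1 M.2.2.2) }⟩
end

section
/- Let F_q be a finite field, let 0 ≤ d_1 ≤ d_2 be integers, let 0 ≤ r_1 ≤ d_1 and r_2 ≥ 0. If Q and Q′ are symmetric bilinear forms on F_q^{d_1}, both of rank r_1, then the number of symmetric bilinear forms on F_q^{d_2} of rank r_2 whose restriction to F_q^{d_1} equals Q is equal to the corresponding number for Q′. (The extension count depends only on d_2, r_2, d_1, r_1.) -/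
/-!
A congruence `M ↦ Nᵀ M N` by `N = diag(P, 1)` maps the symmetric extensions of `Q` of a given
rank bijectively onto those of `Pᵀ Q P`, and a symmetric `Q` of rank `r₁` is congruent to
`diag(Q₀, 0)` with `Q₀` an invertible `r₁ × r₁` matrix. Different such `Q₀` need not be congruent
(over `F_q` the discriminant is an invariant), so the extensions of `diag(Q₀, 0)` and of
`diag(Q₀', 0)` are compared directly: such an extension is a block matrix `[[Q₀, X], [Xᵀ, Z]]` of
rank `r₁ + rank (Z - Xᵀ Q₀⁻¹ X)`, and replacing `(Q₀, Z)` by `(Q₀', Z + Xᵀ (Q₀'⁻¹ - Q₀⁻¹) X)`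
preserves the Schur complement, the symmetry, and the vanishing of the blocks over the kernel
of `diag(Q₀, 0)`.
-/

open Matrix

theorem fromBlocks_submatrix_sum_map {R α β γ δ α' β' γ' δ' : Type*} (A : Matrix α β R)
    (B : Matrix α δ R) (C : Matrix γ β R) (D : Matrix γ δ R) (f : α' → α) (g : γ' → γ)
    (h : β' → β) (k : δ' → δ) :
    (fromBlocks A B C D).submatrix (Sum.map f g) (Sum.map h k) =
      fromBlocks (A.submatrix f h) (B.submatrix f k) (C.submatrix g h) (D.submatrix g k) := by
  ext (i | i) (j | j) <;> rfl

theorem submatrix_sum_map_eq_fromBlocks_zero_iff {R α β δ : Type*} [Zero R]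
    (M : Matrix (α ⊕ δ) (α ⊕ δ) R) (v : β → δ) (A : Matrix α α R) :
    M.submatrix (Sum.map id v) (Sum.map id v) = fromBlocks A 0 0 0 ↔
      M.toBlocks₁₁ = A ∧ M.toBlocks₁₂.submatrix id v = 0 ∧ M.toBlocks₂₁.submatrix v id = 0 ∧
        M.toBlocks₂₂.submatrix v v = 0 := by
  conv_lhs => rw [← fromBlocks_toBlocks M]
  rw [fromBlocks_submatrix_sum_map, fromBlocks_inj, submatrix_id_id]

variable {R K : Type*} [CommRing R] [Field K]

section Congruence

variable {ι : Type*} [Fintype ι] [DecidableEq ι]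

theorem transpose_mul_mul_inj {N A B : Matrix ι ι R} (hN : IsUnit N) :
    Nᵀ * A * N = Nᵀ * B * N ↔ A = B := by
  rw [hN.mul_left_inj, ((isUnit_transpose N).2 hN).mul_right_inj]

theorem isSymm_transpose_mul_mul_iff {N M : Matrix ι ι R} (hN : IsUnit N) :
    (Nᵀ * M * N).IsSymm ↔ M.IsSymm := by
  rw [IsSymm, transpose_mul, transpose_mul, transpose_transpose, ← Matrix.mul_assoc,
    transpose_mul_mul_inj hN, IsSymm]

theorem rank_transpose_mul_mul {N : Matrix ι ι R} (hN : IsUnit N) (M : Matrix ι ι R) :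
    (Nᵀ * M * N).rank = M.rank := by
  rw [isUnit_iff_isUnit_det] at hN
  rw [rank_mul_eq_left_of_isUnit_det _ _ hN,
    rank_mul_eq_right_of_isUnit_det _ _ (by rwa [det_transpose])]

theorem toBlocks₁₁_transpose_mul_mul_fromBlocks {α : Type*} [Fintype α] (P : Matrix α α R)
    (M : Matrix (α ⊕ ι) (α ⊕ ι) R) :
    ((fromBlocks P 0 0 1)ᵀ * M * fromBlocks P 0 0 1).toBlocks₁₁ = Pᵀ * M.toBlocks₁₁ * P := by
  conv_lhs => rw [← fromBlocks_toBlocks M]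
  rw [fromBlocks_transpose, fromBlocks_multiply, fromBlocks_multiply, toBlocks_fromBlocks₁₁]
  simp

theorem exists_reindex_transpose_mul_mul_eq_fromBlocks {Q : Matrix ι ι K} (hQ : Q.IsSymm)
    {r : ℕ} (hr : Q.rank = r) :
    ∃ (P : Matrix ι ι K) (e : ι ≃ Fin r ⊕ Fin (Fintype.card ι - r))
      (Q₀ : Matrix (Fin r) (Fin r) K),
      IsUnit P ∧ Q₀.IsSymm ∧ IsUnit Q₀ ∧ reindex e e (Pᵀ * Q * P) = fromBlocks Q₀ 0 0 0 := by
  subst hr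
  obtain ⟨V, U, e, hV, hU, hVQU⟩ := exists_rank_normal_form Q
  set X := reindex e e (Uᵀ * V⁻¹)
  -- `V Q U = diag(1, 0)` up to reindexing, so `Uᵀ Q U = (Uᵀ V⁻¹) diag(1, 0)`
  have hG : reindex e e (Uᵀ * Q * U) = fromBlocks X.toBlocks₁₁ 0 X.toBlocks₂₁ 0 := by
    have hfac : Uᵀ * Q * U = Uᵀ * V⁻¹ * (V * Q * U) := by
      simp only [Matrix.mul_assoc,
        nonsing_inv_mul_cancel_left _ _ ((isUnit_iff_isUnit_det V).1 hV)]
    rw [hfac, hVQU, reindex_apply, ← submatrix_mul_equiv _ _ _ e.symm, submatrix_submatrix]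
    simp only [Equiv.self_comp_symm, submatrix_id_id]
    change X * _ = _
    conv_lhs => rw [← fromBlocks_toBlocks X]
    rw [fromBlocks_multiply]
    simp
  -- symmetry of `Uᵀ Q U` kills the lower left block, so `X` is block upper triangular
  have hGs := ((isSymm_transpose_mul_mul_iff hU).2 hQ).reindex e
  rw [hG, isSymm_fromBlocks_iff, transpose_zero] at hGs
  obtain ⟨hQ₀, hX₂₁, -, -⟩ := hGs
  refine ⟨U, e, X.toBlocks₁₁, hU, hQ₀, ?_, by rw [hG, ← hX₂₁]⟩
  have hX : IsUnit X.det := by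
    rw [det_reindex_self, ← isUnit_iff_isUnit_det]
    exact ((isUnit_transpose U).2 hU).mul (isUnit_nonsing_inv_iff.2 hV)
  rw [← fromBlocks_toBlocks X, ← hX₂₁, det_fromBlocks_zero₂₁] at hX
  exact (isUnit_iff_isUnit_det _).2 (isUnit_of_mul_isUnit_left hX)

end Congruence

section SchurComplement

variable {α δ : Type*} [Fintype α] [DecidableEq α]

theorem rank_fromBlocks_eq_rank_fromBlocks_schur [Fintype δ] [DecidableEq δ]
    {A : Matrix α α R} (hA : IsUnit A) (X : Matrix α δ R) (Y : Matrix δ α R)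
    (Z : Matrix δ δ R) :
    (fromBlocks A X Y Z).rank = (fromBlocks A 0 0 (Z - Y * A⁻¹ * X)).rank := by
  let := hA.invertible
  rw [fromBlocks_eq_of_invertible₁₁ A X Y Z, invOf_eq_nonsing_inv,
    rank_mul_eq_left_of_isUnit_det _ _ (by simp),
    rank_mul_eq_right_of_isUnit_det _ _ (by simp)]

theorem rank_fromBlocks_zero_zero_congr [Fintype δ] [DecidableEq δ] {A A' : Matrix α α R}
    (hA : IsUnit A) (hA' : IsUnit A') (S : Matrix δ δ R) :
    (fromBlocks A 0 0 S).rank = (fromBlocks A' 0 0 S).rank := by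
  have hfac : fromBlocks A' 0 0 S = fromBlocks (A' * A⁻¹) 0 0 1 * fromBlocks A 0 0 S := by
    rw [fromBlocks_multiply]
    simp [Matrix.mul_assoc, nonsing_inv_mul _ ((isUnit_iff_isUnit_det A).1 hA)]
  rw [hfac, rank_mul_eq_right_of_isUnit_det]
  rw [det_fromBlocks_zero₂₁, det_one, mul_one, ← isUnit_iff_isUnit_det]
  exact hA'.mul (isUnit_nonsing_inv_iff.2 hA)

/-- Replaces the corner `A` by `A'` while keeping the Schur complement
`M₂₂ - M₂₁ * A⁻¹ * M₁₂` fixed. -/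
noncomputable def schurShift (A A' : Matrix α α R) (M : Matrix (α ⊕ δ) (α ⊕ δ) R) :
    Matrix (α ⊕ δ) (α ⊕ δ) R :=
  fromBlocks A' M.toBlocks₁₂ M.toBlocks₂₁
    (M.toBlocks₂₂ + M.toBlocks₂₁ * (A'⁻¹ - A⁻¹) * M.toBlocks₁₂)

theorem rank_schurShift [Fintype δ] [DecidableEq δ] {A A' : Matrix α α R} (hA : IsUnit A)
    (hA' : IsUnit A') {M : Matrix (α ⊕ δ) (α ⊕ δ) R} (hM : M.toBlocks₁₁ = A) :
    (schurShift A A' M).rank = M.rank := by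
  conv_rhs => rw [← fromBlocks_toBlocks M, hM]
  rw [schurShift, rank_fromBlocks_eq_rank_fromBlocks_schur hA',
    rank_fromBlocks_eq_rank_fromBlocks_schur hA, rank_fromBlocks_zero_zero_congr hA' hA]
  congr 2
  simp only [Matrix.mul_sub, Matrix.sub_mul]
  abel

theorem schurShift_schurShift {A A' : Matrix α α R} {M : Matrix (α ⊕ δ) (α ⊕ δ) R}
    (hM : M.toBlocks₁₁ = A) : schurShift A' A (schurShift A A' M) = M := by
  conv_rhs => rw [← fromBlocks_toBlocks M, hM]
  simp only [schurShift, toBlocks_fromBlocks₁₂, toBlocks_fromBlocks₂₁, toBlocks_fromBlocks₂₂,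
    Matrix.mul_sub, Matrix.sub_mul]
  congr 1
  abel

end SchurComplement

def symmExtensions {ι κ : Type*} [Fintype ι] (u : κ → ι) (r : ℕ) (Q : Matrix κ κ R) :
    Set (Matrix ι ι R) :=
  {M | M.IsSymm ∧ M.rank = r ∧ M.submatrix u u = Q}

section Extensions

variable {ι κ : Type*} [Fintype ι]

theorem card_symmExtensions_reindex {ι' κ' : Type*} [Fintype ι'] (e : ι ≃ ι') (f : κ ≃ κ')
    {u : κ → ι} {u' : κ' → ι'} (hu : ∀ t, e (u t) = u' (f t)) (r : ℕ) (Q : Matrix κ κ R) :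
    Nat.card (symmExtensions u r Q) = Nat.card (symmExtensions u' r (reindex f f Q)) := by
  refine Nat.card_congr (Equiv.subtypeEquiv (reindex e e) fun M => ?_)
  have hsub : (reindex e e M).submatrix u' u' = reindex f f (M.submatrix u u) := by
    have hu' : ∀ t, e.symm (u' t) = u (f.symm t) := fun t => by
      rw [Equiv.symm_apply_eq, hu, Equiv.apply_symm_apply]
    ext i j
    simp [hu']
  simp only [symmExtensions, Set.mem_ofPred_eq, hsub, (reindex f f).injective.eq_iff,
    rank_reindex, isSymm_reindex_iff]

theorem card_symmExtensions_castLE {d₁ d₂ : ℕ} (h : d₁ ≤ d₂) (r : ℕ)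
    (Q : Matrix (Fin d₁) (Fin d₁) R) :
    Nat.card (symmExtensions (Fin.castLE h) r Q) =
      Nat.card (symmExtensions (Sum.inl : Fin d₁ → Fin d₁ ⊕ Fin (d₂ - d₁)) r Q) := by
  have hcast : ∀ t, finSumFinEquiv.symm (finCongr (by omega) (Fin.castLE h t)) =
      (Sum.inl t : Fin d₁ ⊕ Fin (d₂ - d₁)) := fun t => by
    rw [← finSumFinEquiv_symm_apply_castAdd]
    rfl
  simpa using card_symmExtensions_reindex ((finCongr _).trans finSumFinEquiv.symm)
    (Equiv.refl _) hcast r Q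

variable [DecidableEq ι] [Fintype κ] [DecidableEq κ]

theorem card_symmExtensions_congr {u : κ → ι} {N : Matrix ι ι R} {P : Matrix κ κ R}
    (hN : IsUnit N) (hP : IsUnit P)
    (hNP : ∀ M, (Nᵀ * M * N).submatrix u u = Pᵀ * M.submatrix u u * P) (r : ℕ)
    (Q : Matrix κ κ R) :
    Nat.card (symmExtensions u r Q) = Nat.card (symmExtensions u r (Pᵀ * Q * P)) := by
  let e : Matrix ι ι R ≃ Matrix ι ι R :=
    (Units.mulRight hN.unit).trans (Units.mulLeft ((isUnit_transpose N).2 hN).unit)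
  have he : ∀ M, e M = Nᵀ * M * N := fun M => by
    simp [e, Matrix.mul_assoc]
  refine Nat.card_congr (Equiv.subtypeEquiv e fun M => ?_)
  simp only [symmExtensions, Set.mem_ofPred_eq, he, isSymm_transpose_mul_mul_iff hN,
    rank_transpose_mul_mul hN, hNP, transpose_mul_mul_inj hP]

theorem card_symmExtensions_inl_congr {P : Matrix κ κ R} (hP : IsUnit P) (r : ℕ)
    (Q : Matrix κ κ R) :
    Nat.card (symmExtensions (Sum.inl : κ → κ ⊕ ι) r Q) =
      Nat.card (symmExtensions (Sum.inl : κ → κ ⊕ ι) r (Pᵀ * Q * P)) := by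
  refine card_symmExtensions_congr (N := fromBlocks P 0 0 1) ?_ hP
    (toBlocks₁₁_transpose_mul_mul_fromBlocks P) r Q
  rw [isUnit_iff_isUnit_det, det_fromBlocks_zero₂₁, det_one, mul_one]
  exact (isUnit_iff_isUnit_det P).1 hP

theorem exists_card_symmExtensions_inl_eq {Q : Matrix κ κ K} (hQ : Q.IsSymm) {r : ℕ}
    (hr : Q.rank = r) (r₂ : ℕ) :
    ∃ Q₀ : Matrix (Fin r) (Fin r) K, Q₀.IsSymm ∧ IsUnit Q₀ ∧
      Nat.card (symmExtensions (Sum.inl : κ → κ ⊕ ι) r₂ Q) =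
        Nat.card (symmExtensions (Sum.map id Sum.inl :
          Fin r ⊕ Fin (Fintype.card κ - r) → Fin r ⊕ (Fin (Fintype.card κ - r) ⊕ ι))
          r₂ (fromBlocks Q₀ 0 0 0)) := by
  obtain ⟨P, e, Q₀, hP, hQ₀s, hQ₀, hPQP⟩ := exists_reindex_transpose_mul_mul_eq_fromBlocks hQ hr
  refine ⟨Q₀, hQ₀s, hQ₀, ?_⟩
  rw [card_symmExtensions_inl_congr hP, ← hPQP]
  refine card_symmExtensions_reindex ((e.sumCongr (Equiv.refl ι)).trans (Equiv.sumAssoc _ _ _))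
    e (fun t => ?_) r₂ _
  simp only [Equiv.trans_apply, Equiv.sumCongr_apply, Sum.map_inl]
  cases e t <;> rfl

end Extensions

section SchurShift

variable {α β δ : Type*} [Fintype α] [DecidableEq α] [Fintype δ] [DecidableEq δ]

theorem mapsTo_schurShift (v : β → δ) (r : ℕ) {A A' : Matrix α α R} (hA : IsUnit A)
    (hA' : IsUnit A') (hAs : A.IsSymm) (hA's : A'.IsSymm) :
    Set.MapsTo (schurShift A A') (symmExtensions (Sum.map id v) r (fromBlocks A 0 0 0))
      (symmExtensions (Sum.map id v) r (fromBlocks A' 0 0 0)) := by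
  rintro M ⟨hM, hrank, hsub⟩
  rw [submatrix_sum_map_eq_fromBlocks_zero_iff] at hsub
  obtain ⟨h₁₁, h₁₂, h₂₁, h₂₂⟩ := hsub
  rw [← fromBlocks_toBlocks M, isSymm_fromBlocks_iff] at hM
  obtain ⟨-, hX, -, hZ⟩ := hM
  have hC : (A'⁻¹ - A⁻¹).IsSymm := hA's.inv.sub hAs.inv
  refine ⟨hA's.fromBlocks hX (hZ.add ?_), (rank_schurShift hA hA' h₁₁).trans hrank, ?_⟩
  · rw [← hX, IsSymm, transpose_mul, transpose_mul, transpose_transpose, hC.eq,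
      Matrix.mul_assoc]
  · rw [schurShift, submatrix_sum_map_eq_fromBlocks_zero_iff]
    simp only [toBlocks_fromBlocks₁₁, toBlocks_fromBlocks₁₂, toBlocks_fromBlocks₂₁,
      toBlocks_fromBlocks₂₂, true_and]
    refine ⟨h₁₂, h₂₁, ?_⟩
    change M.toBlocks₂₂.submatrix v v +
      (M.toBlocks₂₁ * (A'⁻¹ - A⁻¹) * M.toBlocks₁₂).submatrix v v = 0
    rw [submatrix_mul _ _ _ id _ Function.bijective_id,
      submatrix_mul _ _ _ id _ Function.bijective_id, h₂₂, h₂₁, h₁₂]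
    simp

theorem card_symmExtensions_fromBlocks_zero (v : β → δ) (r : ℕ) {A A' : Matrix α α R}
    (hA : IsUnit A) (hA' : IsUnit A') (hAs : A.IsSymm) (hA's : A'.IsSymm) :
    Nat.card (symmExtensions (Sum.map id v) r (fromBlocks A 0 0 0)) =
      Nat.card (symmExtensions (Sum.map id v) r (fromBlocks A' 0 0 0)) := by
  have hinv : ∀ B B' : Matrix α α R,
      Set.LeftInvOn (schurShift B' B) (schurShift B B')
        (symmExtensions (Sum.map id v) r (fromBlocks B 0 0 0)) := fun _ _ M hM =>
    schurShift_schurShift ((submatrix_sum_map_eq_fromBlocks_zero_iff M v _).1 hM.2.2).1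
  exact Nat.card_congr (Set.BijOn.equiv _ (Set.InvOn.bijOn ⟨hinv A A', hinv A' A⟩
    (mapsTo_schurShift v r hA hA' hAs hA's) (mapsTo_schurShift v r hA' hA hA's hAs)))

end SchurShift

theorem stmt_6_general (K : Type) [Field K] (d₁ d₂ r₁ r₂ : ℕ)
    (h : d₁ ≤ d₂)
    (Q Q' : Matrix (Fin d₁) (Fin d₁) K)
    (hQ : Q.IsSymm) (hQrank : Q.rank = r₁)
    (hQ' : Q'.IsSymm) (hQ'rank : Q'.rank = r₁) :
    Nat.card {M : Matrix (Fin d₂) (Fin d₂) K //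
        M.IsSymm ∧ M.rank = r₂ ∧ M.submatrix (Fin.castLE h) (Fin.castLE h) = Q} =
      Nat.card {M : Matrix (Fin d₂) (Fin d₂) K //
        M.IsSymm ∧ M.rank = r₂ ∧ M.submatrix (Fin.castLE h) (Fin.castLE h) = Q'} := by
  change Nat.card (symmExtensions (Fin.castLE h) r₂ Q) =
    Nat.card (symmExtensions (Fin.castLE h) r₂ Q')
  obtain ⟨Q₀, hQ₀s, hQ₀, hcard⟩ :=
    exists_card_symmExtensions_inl_eq (ι := Fin (d₂ - d₁)) hQ hQrank r₂
  obtain ⟨Q₀', hQ₀'s, hQ₀', hcard'⟩ :=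
    exists_card_symmExtensions_inl_eq (ι := Fin (d₂ - d₁)) hQ' hQ'rank r₂
  rw [card_symmExtensions_castLE, card_symmExtensions_castLE, hcard, hcard',
    card_symmExtensions_fromBlocks_zero _ r₂ hQ₀ hQ₀' hQ₀s hQ₀'s]

/-- Over a finite field, the number of extensions of a symmetric bilinear form of rank
`r₁` on `F_q^{d₁}` to a symmetric bilinear form of rank `r₂` on `F_q^{d₂}` does not
depend on the form: here `F_q^{d₁}` sits inside `F_q^{d₂}` as the span of the first
`d₁` standard basis vectors, and restriction is along this embedding. -/
theorem stmt_6 (K : Type) [Field K] [Fintype K] (d₁ d₂ r₁ r₂ : ℕ)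
    (h : d₁ ≤ d₂) (hr : r₁ ≤ d₁)
    (Q Q' : Matrix (Fin d₁) (Fin d₁) K)
    (hQ : Q.IsSymm) (hQrank : Q.rank = r₁)
    (hQ' : Q'.IsSymm) (hQ'rank : Q'.rank = r₁) :
    Nat.card {M : Matrix (Fin d₂) (Fin d₂) K //
        M.IsSymm ∧ M.rank = r₂ ∧ M.submatrix (Fin.castLE h) (Fin.castLE h) = Q} =
      Nat.card {M : Matrix (Fin d₂) (Fin d₂) K //
        M.IsSymm ∧ M.rank = r₂ ∧ M.submatrix (Fin.castLE h) (Fin.castLE h) = Q'} :=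
  stmt_6_general K d₁ d₂ r₁ r₂ h Q Q' hQ hQrank hQ' hQ'rank
end

section
/- Let F_q be a finite field with q elements, d ≥ 0, 0 ≤ r_1 ≤ d, and let Q be a symmetric bilinear form on F_q^d of rank r_1. Then the number of symmetric bilinear forms on F_q^{d+1} of rank r_2 whose restriction to F_q^d equals Q is: q^{r_1} if r_2 = r_1; q^{r_1+1} − q^{r_1} if r_2 = r_1 + 1; q^{d+1} − q^{r_1+1} if r_2 = r_1 + 2; and 0 otherwise. -/
/-!
Write an extension of `Q` as the bordered matrix `M = !![Q, v; vᵀ, a]`. Appending a column `c`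
to a matrix raises its rank by one if `c` lies outside its column space and keeps it otherwise.
Apply this to the column `v` of `[Q | v]` and then to the last row `(vᵀ, a)` of `M`; that row lies
in the row space of `[Q | v]` iff `v = Q w` and `a = wᵀ Q w`, a value independent of `w` since `Q`
is symmetric. So `rank M - rank Q` is `0` if `v ∈ range Q` and `a` is this critical corner, `1`
if `v ∈ range Q` and `a` is any other corner, and `2` if `v ∉ range Q`. Shearing `a` by the
critical corner turns the three cases into the products `range Q × {0}`, `range Q × (K \ {0})`
and `(range Q)ᶜ × K`, of sizes `q ^ r₁`, `q ^ r₁ (q - 1)` and `(q ^ d - q ^ r₁) q`.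
-/

open Matrix Module LinearMap

section Border

variable {α n : Type*}

def Matrix.border (Q : Matrix n n α) (v : n → α) (a : α) : Matrix (n ⊕ Fin 1) (n ⊕ Fin 1) α :=
  fromRows (fromCols Q (replicateCol (Fin 1) v)) (replicateRow (Fin 1) (Sum.elim v fun _ => a))

theorem Matrix.isSymm_border {Q : Matrix n n α} (hQ : Q.IsSymm) (v : n → α) (a : α) :
    (border Q v a).IsSymm := by
  ext (i | i) (j | j) <;> simp [Matrix.border, hQ.apply]

theorem Matrix.IsSymm.eq_border {N : Matrix (n ⊕ Fin 1) (n ⊕ Fin 1) α} (hN : N.IsSymm)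
    {Q : Matrix n n α} (hQ : N.toBlocks₁₁ = Q) :
    N = border Q (fun i => N (.inl i) (.inr 0)) (N (.inr 0) (.inr 0)) := by
  subst hQ
  ext (i | i) (j | j)
  · rfl
  · rw [Fin.fin_one_eq_zero j]; rfl
  · rw [Fin.fin_one_eq_zero i]; exact hN.apply _ _
  · rw [Fin.fin_one_eq_zero i, Fin.fin_one_eq_zero j]; rfl

end Border

section CommSemiring

variable {R : Type*} [CommSemiring R] {m n n₁ n₂ ι : Type*}

theorem Matrix.range_mulVecLin_fromCols [Fintype n₁] [Fintype n₂] (A : Matrix m n₁ R)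
    (B : Matrix m n₂ R) :
    range (fromCols A B).mulVecLin = range A.mulVecLin ⊔ range B.mulVecLin := by
  rw [range_mulVecLin, range_mulVecLin, range_mulVecLin, ← Submodule.span_union, col,
    transpose_fromCols]
  exact congrArg _ (Set.Sum.elim_range _ _)

theorem Matrix.range_mulVecLin_replicateCol [Fintype ι] [Nonempty ι] (c : m → R) :
    range (replicateCol ι c).mulVecLin = Submodule.span R {c} := by
  rw [range_mulVecLin, col, transpose_replicateCol]
  exact congrArg _ Set.range_const

theorem Matrix.sumElim_mem_range_transpose_fromCols_replicateCol_iff [Fintype m] [Nonempty ι]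
    (A : Matrix m n R) (c : m → R) (u : n → R) (a : R) :
    Sum.elim u (fun _ : ι => a) ∈ range (fromCols A (replicateCol ι c))ᵀ.mulVecLin ↔
      ∃ y, Aᵀ *ᵥ y = u ∧ c ⬝ᵥ y = a := by
  simp only [mem_range, mulVecLin_apply, transpose_fromCols, transpose_replicateCol,
    fromRows_mulVec, Sum.elim_eq_iff, replicateRow_mulVec_eq_const]
  exact exists_congr fun y => and_congr_right' Function.const_inj

theorem Matrix.IsSymm.mulVec_dotProduct [Fintype n] {Q : Matrix n n R} (hQ : Q.IsSymm)
    (x y : n → R) :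
    Q *ᵥ x ⬝ᵥ y = x ⬝ᵥ Q *ᵥ y := by
  rw [dotProduct_mulVec, ← vecMul_transpose, hQ.eq, dotProduct_comm]

/-- For `v = Q *ᵥ w` this is `wᵀ Q w`; for symmetric `Q` it does not depend on which preimage
`Function.invFun` picks. For `v ∉ range Q` the value is junk. -/
noncomputable def Matrix.criticalCorner [Fintype n] (Q : Matrix n n R) (v : n → R) : R :=
  v ⬝ᵥ Function.invFun Q.mulVec v

theorem Matrix.IsSymm.exists_mulVec_eq_and_dotProduct_eq_iff [Fintype n] {Q : Matrix n n R}
    (hQ : Q.IsSymm) (v : n → R) (a : R) :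
    (∃ y, Q *ᵥ y = v ∧ v ⬝ᵥ y = a) ↔ v ∈ range Q.mulVecLin ∧ a = Q.criticalCorner v := by
  constructor
  · rintro ⟨y, rfl, rfl⟩
    have hw : Q *ᵥ Function.invFun Q.mulVec (Q *ᵥ y) = Q *ᵥ y := Function.invFun_eq ⟨y, rfl⟩
    refine ⟨⟨y, rfl⟩, ?_⟩
    rw [criticalCorner, hQ.mulVec_dotProduct _ (Function.invFun Q.mulVec _), hw, dotProduct_comm]
  · rintro ⟨⟨w, rfl⟩, rfl⟩
    exact ⟨_, Function.invFun_eq ⟨w, rfl⟩, rfl⟩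

end CommSemiring

section RankIncrement

variable {α G : Type*} (s : Set α) [DecidablePred (· ∈ s)] [DecidableEq G]

def rankIncrement (f : α → G) (p : α × G) : ℕ :=
  (if p.1 ∈ s then 0 else 1) + if p.1 ∈ s ∧ p.2 = f p.1 then 0 else 1

theorem rankIncrement_add_right [AddGroup G] (f : α → G) (x : α) (g : G) :
    rankIncrement s f (x, g + f x) = rankIncrement s 0 (x, g) := by
  simp only [rankIncrement, add_eq_right, Pi.zero_apply]

theorem card_add_rankIncrement_eq [AddGroup G] [Finite α] [Finite G] (f : α → G) (r r₂ : ℕ) :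
    Nat.card {p : α × G // r + rankIncrement s f p = r₂} =
      if r₂ = r then s.ncard
      else if r₂ = r + 1 then s.ncard * Nat.card G - s.ncard
      else if r₂ = r + 2 then Nat.card α * Nat.card G - s.ncard * Nat.card G
      else 0 := by
  have shear : Nat.card {p : α × G // r + rankIncrement s f p = r₂} =
      Nat.card {p : α × G // r + rankIncrement s 0 p = r₂} :=
    Nat.card_congr (((Equiv.refl α).prodShear fun x => Equiv.addRight (f x)).subtypeEquiv
      fun p => by simp [rankIncrement_add_right]).symm
  have card_eq_ncard_prod (S : Set α) (T : Set G)
      (h : ∀ x g, r + rankIncrement s 0 (x, g) = r₂ ↔ x ∈ S ∧ g ∈ T) :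
      Nat.card {p : α × G // r + rankIncrement s 0 p = r₂} = S.ncard * T.ncard := by
    rw [← Set.ncard_prod, ← Nat.card_coe_set_eq]
    exact Nat.card_congr (Equiv.subtypeEquivRight fun p => h p.1 p.2)
  have eq_iff_cases (x : α) (g : G) : r + rankIncrement s 0 (x, g) = r₂ ↔
      x ∈ s ∧ g = 0 ∧ r₂ = r ∨ x ∈ s ∧ g ≠ 0 ∧ r₂ = r + 1 ∨ x ∉ s ∧ r₂ = r + 2 := by
    by_cases hx : x ∈ s <;> by_cases hg : g = 0 <;> simp [rankIncrement, hx, hg] <;> omega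
  have hs := Set.ncard_add_ncard_compl s
  have hG := Set.ncard_add_ncard_compl ({0} : Set G)
  rw [shear]
  split_ifs with h₀ h₁ h₂
  · rw [card_eq_ncard_prod s {0} fun x g => (eq_iff_cases x g).trans (by simp [h₀]),
      Set.ncard_singleton, mul_one]
  · rw [card_eq_ncard_prod s {0}ᶜ fun x g => (eq_iff_cases x g).trans (by simp [h₁]), ← hG,
      Set.ncard_singleton, mul_add, mul_one, Nat.add_sub_cancel_left]
  · rw [card_eq_ncard_prod sᶜ Set.univ fun x g => (eq_iff_cases x g).trans (by simp [h₂]),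
      Set.ncard_univ, ← hs, add_mul, Nat.add_sub_cancel_left]
  · rw [card_eq_ncard_prod ∅ Set.univ fun x g => (eq_iff_cases x g).trans (by simp [h₀, h₁, h₂]),
      Set.ncard_empty, zero_mul]

end RankIncrement

section Field

variable {K : Type*} [Field K] {m n ι : Type*} [Fintype m] [Fintype n] [Fintype ι] [Nonempty ι]

open Classical in
theorem Matrix.rank_fromCols_replicateCol (A : Matrix m n K) (c : m → K) :
    (fromCols A (replicateCol ι c)).rank = A.rank + if c ∈ range A.mulVecLin then 0 else 1 := by
  rw [rank, range_mulVecLin_fromCols, range_mulVecLin_replicateCol]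
  split_ifs with hc
  · rw [sup_eq_left.mpr ((Submodule.span_singleton_le_iff_mem _ _).mpr hc), add_zero, rank]
  · exact Submodule.finrank_sup_span_singleton hc

open Classical in
theorem Matrix.rank_fromRows_replicateRow (A : Matrix m n K) (r : n → K) :
    (fromRows A (replicateRow ι r)).rank = A.rank + if r ∈ range Aᵀ.mulVecLin then 0 else 1 := by
  rw [← rank_transpose, transpose_fromRows, transpose_replicateRow, rank_fromCols_replicateCol,
    rank_transpose]

open Classical in
theorem Matrix.IsSymm.rank_border {Q : Matrix n n K} (hQ : Q.IsSymm) (v : n → K) (a : K) :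
    (border Q v a).rank =
      Q.rank + rankIncrement (range Q.mulVecLin : Set (n → K)) Q.criticalCorner (v, a) := by
  rw [border, rank_fromRows_replicateRow, rank_fromCols_replicateCol,
    sumElim_mem_range_transpose_fromCols_replicateCol_iff, hQ.eq,
    hQ.exists_mulVec_eq_and_dotProduct_eq_iff, add_assoc, rankIncrement]
  -- the two sides differ only in their `Decidable` instances
  congr

def Matrix.borderEquiv {Q : Matrix n n K} (hQ : Q.IsSymm) (r : ℕ) :
    {p : (n → K) × K // (border Q p.1 p.2).rank = r} ≃
      {N : Matrix (n ⊕ Fin 1) (n ⊕ Fin 1) K // N.IsSymm ∧ N.rank = r ∧ N.toBlocks₁₁ = Q} where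
  toFun p := ⟨border Q p.1.1 p.1.2, isSymm_border hQ _ _, p.2, rfl⟩
  invFun N := ⟨(fun i => N.1 (.inl i) (.inr 0), N.1 (.inr 0) (.inr 0)),
    N.2.1.eq_border N.2.2.2 ▸ N.2.2.1⟩
  left_inv _ := rfl
  right_inv N := Subtype.ext (N.2.1.eq_border N.2.2.2).symm

end Field

theorem stmt_7_general (K : Type) [Field K] [Fintype K] (d r₁ r₂ : ℕ)
    (Q : Matrix (Fin d) (Fin d) K) (hQ : Q.IsSymm) (hQrank : Q.rank = r₁) :
    Nat.card {M : Matrix (Fin (d + 1)) (Fin (d + 1)) K //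
        M.IsSymm ∧ M.rank = r₂ ∧
        M.submatrix (Fin.castLE (Nat.le_succ d)) (Fin.castLE (Nat.le_succ d)) = Q} =
      if r₂ = r₁ then (Fintype.card K) ^ r₁
      else if r₂ = r₁ + 1 then (Fintype.card K) ^ (r₁ + 1) - (Fintype.card K) ^ r₁
      else if r₂ = r₁ + 2 then (Fintype.card K) ^ (d + 1) - (Fintype.card K) ^ (r₁ + 1)
      else 0 := by
  classical
  refine (Nat.card_congr <| (reindex finSumFinEquiv.symm finSumFinEquiv.symm).subtypeEquiv
    (q := fun N => N.IsSymm ∧ N.rank = r₂ ∧ N.toBlocks₁₁ = Q) fun M => ?_).trans ?_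
  · rw [isSymm_reindex_iff, rank_reindex]
    -- `finSumFinEquiv (.inl i)` unfolds to `Fin.castLE _ i`
    rfl
  have hrange : (range Q.mulVecLin : Set (Fin d → K)).ncard = Fintype.card K ^ r₁ := by
    rw [← Nat.card_coe_set_eq, ← hQrank, ← Nat.card_eq_fintype_card]
    exact natCard_eq_pow_finrank
  rw [← Nat.card_congr (borderEquiv hQ r₂)]
  simp_rw [hQ.rank_border, card_add_rankIncrement_eq, hQrank, hrange]
  simp only [Nat.card_eq_fintype_card, Fintype.card_fun, Fintype.card_fin, ← pow_succ]

/-- MacWilliams' extension count: if `Q` is a symmetric bilinear form of rank `r₁` on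
`F_q^d`, the number of symmetric bilinear forms on `F_q^{d+1}` of rank `r₂` restricting
to `Q` (along the embedding of `F_q^d` as the span of the first `d` standard basis
vectors) is `q^{r₁}` if `r₂ = r₁`, `q^{r₁+1} - q^{r₁}` if `r₂ = r₁ + 1`,
`q^{d+1} - q^{r₁+1}` if `r₂ = r₁ + 2`, and `0` otherwise. -/
theorem stmt_7 (K : Type) [Field K] [Fintype K] (d r₁ r₂ : ℕ) (hr : r₁ ≤ d)
    (Q : Matrix (Fin d) (Fin d) K) (hQ : Q.IsSymm) (hQrank : Q.rank = r₁) :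
    Nat.card {M : Matrix (Fin (d + 1)) (Fin (d + 1)) K //
        M.IsSymm ∧ M.rank = r₂ ∧
        M.submatrix (Fin.castLE (Nat.le_succ d)) (Fin.castLE (Nat.le_succ d)) = Q} =
      if r₂ = r₁ then (Fintype.card K) ^ r₁
      else if r₂ = r₁ + 1 then (Fintype.card K) ^ (r₁ + 1) - (Fintype.card K) ^ r₁
      else if r₂ = r₁ + 2 then (Fintype.card K) ^ (d + 1) - (Fintype.card K) ^ (r₁ + 1)
      else 0 :=
  stmt_7_general K d r₁ r₂ Q hQ hQrank
end

section
/- For all integers 0 ≤ r_1 ≤ d_1 ≤ d_2 and r_2 ≥ 0 there exists a polynomial P ∈ ℤ[X] such that for every finite field F_q with q elements, C_q(d_2, r_2, d_1, r_1) = P(q). -/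
/-!
Bordering a symmetric `d × d` matrix `M` of rank `s` to `[[M, b], [bᵀ, c]]` gives rank `s + 2`
when `b` is outside the row space of `M`. Otherwise `b = xᵀ M`, and the rank is `s` when
`c = xᵀ M x` (a value independent of `x`, by symmetry) and `s + 1` for the other `q - 1` values
of `c`. So the number of extensions of `M` to a given rank is a polynomial in `q` depending only
on `d`, `s` and that rank (`borderCountPoly d s r`), and `C_q(d + 1, r, d₁, r₁)` is the sum over `s`
of `C_q(d, s, d₁, r₁) · borderCountPoly d s r (q)`.
Induction on `d₂`, starting from `C_q(d₁, r, d₁, r₁) = [r = r₁]`, finishes the proof.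
-/

/-- The standard symmetric bilinear form of rank `r` on `K^d` (for `r ≤ d`): the
diagonal matrix with `r` ones followed by zeros. -/
def stdForm (K : Type) [Field K] (d r : ℕ) : Matrix (Fin d) (Fin d) K :=
  Matrix.diagonal fun i => if (i : ℕ) < r then 1 else 0

/-- `C_q(d₂, r₂, d₁, r₁)`: the number of symmetric bilinear forms on `F_q^{d₂}` of rank
`r₂` whose restriction to `F_q^{d₁}` (embedded as the span of the first `d₁` standard
basis vectors) is a fixed symmetric bilinear form of rank `r₁` — this number does not
depend on the choice of the fixed form, so we use the standard one — with the
convention that `C_q(d₂, r₂, d₁, r₁) = 0` when `r₁ > d₁` (or `d₁ > d₂`). -/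
noncomputable def C (K : Type) [Field K] [Fintype K] (d₂ r₂ d₁ r₁ : ℕ) : ℕ :=
  if h : d₁ ≤ d₂ ∧ r₁ ≤ d₁ then
    Nat.card {M : Matrix (Fin d₂) (Fin d₂) K //
      M.IsSymm ∧ M.rank = r₂ ∧
      M.submatrix (Fin.castLE h.1) (Fin.castLE h.1) = stdForm K d₁ r₁}
  else 0

open Matrix Finset
open Polynomial (X)
open scoped Polynomial

theorem card_filter_fst_and {α β : Type*} [Fintype α] [Fintype β] (p : α → Prop) [DecidablePred p]
    (q : α → β → Prop) [∀ a, DecidablePred (q a)] :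
    #{x : α × β | p x.1 ∧ q x.1 x.2} = ∑ a with p a, #{b | q a b} := by
  simp only [card_filter, Fintype.sum_prod_type, sum_filter, ite_and, sum_ite_irrel, sum_const_zero]

/-- The number of `(b, c)` with `rank [[M, b], [bᵀ, c]] = r`, for `M` symmetric `d × d` of rank `s`
over `𝔽_q`: each of the `q ^ s` vectors `b` in the row space of `M` admits one `c` giving rank `s`
and `q - 1` giving rank `s + 1`; each of the other `q ^ d - q ^ s` vectors gives rank `s + 2`. -/
noncomputable def borderCountPoly (d s r : ℕ) : ℤ[X] :=
  X ^ s * (if r = s then 1 else if r = s + 1 then X - 1 else 0) +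
    (X ^ d - X ^ s) * (if r = s + 2 then X else 0)

namespace Matrix

variable {K : Type*} [Field K]

section SnocRow

variable {m : ℕ} {n : Type*} [Fintype n]

theorem rank_of_snoc_of_mem_range (A : Matrix (Fin m) n K) {v : n → K}
    (hv : v ∈ LinearMap.range A.vecMulLinear) : (of (Fin.snoc A.row v)).rank = A.rank := by
  rw [range_vecMulLinear] at hv
  rw [rank_eq_finrank_span_row, rank_eq_finrank_span_row]
  change Module.finrank K (Submodule.span K (Set.range (Fin.snoc A.row v))) = _
  rw [Fin.range_snoc, Submodule.span_insert_eq_span hv]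

theorem rank_of_snoc_of_notMem_range (A : Matrix (Fin m) n K) {v : n → K}
    (hv : v ∉ LinearMap.range A.vecMulLinear) : (of (Fin.snoc A.row v)).rank = A.rank + 1 := by
  rw [range_vecMulLinear] at hv
  rw [rank_eq_finrank_span_row, rank_eq_finrank_span_row]
  change Module.finrank K (Submodule.span K (Set.range (Fin.snoc A.row v))) = _
  rw [Fin.range_snoc, Submodule.span_insert, sup_comm, Submodule.finrank_sup_span_singleton hv]

end SnocRow

variable {α : Type*} {d : ℕ}

/-- The bordered matrix `[[M, b], [bᵀ, c]]`. -/
def border_s9 (M : Matrix (Fin d) (Fin d) α) (b : Fin d → α) (c : α) :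
    Matrix (Fin (d + 1)) (Fin (d + 1)) α :=
  of (Fin.snoc (fun i => Fin.snoc (M i) (b i)) (Fin.snoc b c))

section border_s9

variable (M : Matrix (Fin d) (Fin d) α) (b : Fin d → α) (c : α)

@[simp] theorem border_castSucc_castSucc (i j : Fin d) :
    border_s9 M b c i.castSucc j.castSucc = M i j := by simp [border_s9]

@[simp] theorem border_castSucc_last (i : Fin d) :
    border_s9 M b c i.castSucc (Fin.last d) = b i := by simp [border_s9]

@[simp] theorem border_last_castSucc (j : Fin d) :
    border_s9 M b c (Fin.last d) j.castSucc = b j := by simp [border_s9]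

@[simp] theorem border_last_last : border_s9 M b c (Fin.last d) (Fin.last d) = c := by
  simp [border_s9]

theorem border_eq_of_snoc :
    border_s9 M b c = of (Fin.snoc (of (Fin.snoc Mᵀ.row b))ᵀ.row (Fin.snoc b c)) := by
  ext i j
  induction i using Fin.lastCases <;> induction j using Fin.lastCases <;> simp [border_s9]

theorem IsSymm.border_s9 {M : Matrix (Fin d) (Fin d) α} (hM : M.IsSymm) (b : Fin d → α) (c : α) :
    (border_s9 M b c).IsSymm := by
  ext i j
  induction i using Fin.lastCases <;> induction j using Fin.lastCases <;> simp [hM.apply]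

theorem border_submatrix_castLE {d₁ : ℕ} (h : d₁ ≤ d) (h' : d₁ ≤ d + 1) :
    (border_s9 M b c).submatrix (Fin.castLE h') (Fin.castLE h') =
      M.submatrix (Fin.castLE h) (Fin.castLE h) := by
  ext i j
  exact border_castSucc_castSucc M b c (Fin.castLE h i) (Fin.castLE h j)

end border_s9

theorem IsSymm.border_submatrix_castSucc {M : Matrix (Fin (d + 1)) (Fin (d + 1)) α}
    (hM : M.IsSymm) :
    Matrix.border_s9 (M.submatrix Fin.castSucc Fin.castSucc) (fun i => M i.castSucc (Fin.last d))
      (M (Fin.last d) (Fin.last d)) = M := by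
  ext i j
  induction i using Fin.lastCases <;> induction j using Fin.lastCases <;> simp [hM.apply]

theorem vecMul_transpose_of_snoc [CommSemiring α] {n : ℕ} (A : Matrix (Fin n) (Fin d) α)
    (v : Fin d → α) (y : Fin d → α) :
    y ᵥ* (of (Fin.snoc A.row v))ᵀ = Fin.snoc (y ᵥ* Aᵀ) (y ⬝ᵥ v) := by
  ext i
  induction i using Fin.lastCases with
  | last => simp only [vecMul, dotProduct, transpose_apply, of_apply, Fin.snoc_last]
  | cast i => simp only [vecMul, dotProduct, transpose_apply, of_apply, Fin.snoc_castSucc]; rfl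

variable {M : Matrix (Fin d) (Fin d) K}

theorem IsSymm.dotProduct_vecMul_comm (hM : M.IsSymm) (x y : Fin d → K) :
    y ⬝ᵥ (x ᵥ* M) = x ⬝ᵥ (y ᵥ* M) := by
  rw [dotProduct_comm, ← dotProduct_mulVec, ← vecMul_transpose, hM.eq]

theorem rank_border_of_notMem_range (hM : M.IsSymm) {b : Fin d → K}
    (hb : b ∉ LinearMap.range M.vecMulLinear) (c : K) :
    (border_s9 M b c).rank = M.rank + 2 := by
  have hlast : Fin.snoc b c ∉ LinearMap.range (of (Fin.snoc Mᵀ.row b))ᵀ.vecMulLinear := by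
    rintro ⟨y, hy⟩
    rw [vecMulLinear_apply, vecMul_transpose_of_snoc, transpose_transpose, Fin.snoc_inj] at hy
    exact hb ⟨y, hy.1⟩
  rw [border_eq_of_snoc, rank_of_snoc_of_notMem_range _ hlast, rank_transpose,
    rank_of_snoc_of_notMem_range _ (by rwa [hM.eq]), rank_transpose]

theorem rank_border_vecMul [DecidableEq K] (hM : M.IsSymm) (x : Fin d → K) (c : K) :
    (border_s9 M (x ᵥ* M) c).rank = M.rank + if c = x ⬝ᵥ (x ᵥ* M) then 0 else 1 := by
  have hlast : Fin.snoc (x ᵥ* M) c ∈ LinearMap.range (of (Fin.snoc Mᵀ.row (x ᵥ* M)))ᵀ.vecMulLinear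
      ↔ c = x ⬝ᵥ (x ᵥ* M) := by
    simp only [LinearMap.mem_range, vecMulLinear_apply, vecMul_transpose_of_snoc,
      transpose_transpose, Fin.snoc_inj]
    constructor
    · rintro ⟨y, hyM, rfl⟩
      rw [hM.dotProduct_vecMul_comm, hyM]
    · rintro rfl
      exact ⟨x, rfl, rfl⟩
  have hb : x ᵥ* M ∈ LinearMap.range Mᵀ.vecMulLinear := ⟨x, by rw [hM.eq]; rfl⟩
  rw [border_eq_of_snoc]
  split_ifs with hc
  · rw [rank_of_snoc_of_mem_range _ (hlast.2 hc), rank_transpose, rank_of_snoc_of_mem_range _ hb,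
      rank_transpose, add_zero]
  · rw [rank_of_snoc_of_notMem_range _ (mt hlast.1 hc), rank_transpose,
      rank_of_snoc_of_mem_range _ hb, rank_transpose]

section Count

variable [Fintype K]

theorem card_rank_border_vecMul (hM : M.IsSymm) (x : Fin d → K) (r : ℕ) :
    (#{c | (border_s9 M (x ᵥ* M) c).rank = r} : ℤ) =
      if r = M.rank then 1 else if r = M.rank + 1 then (Fintype.card K : ℤ) - 1 else 0 := by
  classical
  simp_rw [rank_border_vecMul hM]
  split_ifs with h0 h1
  · simp [h0, card_eq_one, eq_singleton_iff_unique_mem]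
  · simp [h1, filter_ne', Nat.cast_sub Fintype.card_pos]
  · simp only [Nat.cast_eq_zero, card_eq_zero, filter_eq_empty_iff]
    intro c _
    split_ifs <;> omega

theorem card_rank_border_of_notMem_range (hM : M.IsSymm) {b : Fin d → K}
    (hb : b ∉ LinearMap.range M.vecMulLinear) (r : ℕ) :
    (#{c | (border_s9 M b c).rank = r} : ℤ) = if r = M.rank + 2 then (Fintype.card K : ℤ) else 0 := by
  simp_rw [rank_border_of_notMem_range hM hb]
  split_ifs with h
  · simp [h]
  · simp [Ne.symm h]

theorem card_range_vecMulLinear {m n : Type*} [Fintype m] [Fintype n] (A : Matrix m n K) :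
    Nat.card (LinearMap.range A.vecMulLinear) = Fintype.card K ^ A.rank := by
  rw [Module.natCard_eq_pow_finrank (K := K), rank_eq_finrank_span_row, range_vecMulLinear,
    Nat.card_eq_fintype_card]

theorem card_rank_border (hM : M.IsSymm) (r : ℕ) :
    (#{p : (Fin d → K) × K | (border_s9 M p.1 p.2).rank = r} : ℤ) =
      (borderCountPoly d M.rank r).eval (Fintype.card K : ℤ) := by
  classical
  set W := LinearMap.range M.vecMulLinear
  have hfiber : ∀ b : Fin d → K, (#{c | (border_s9 M b c).rank = r} : ℤ) =
      if b ∈ W then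
        (if r = M.rank then 1 else if r = M.rank + 1 then (Fintype.card K : ℤ) - 1 else 0)
      else if r = M.rank + 2 then (Fintype.card K : ℤ) else 0 := by
    intro b
    by_cases hb : b ∈ W
    · rw [if_pos hb]
      obtain ⟨x, rfl⟩ := hb
      exact card_rank_border_vecMul hM x r
    · rw [if_neg hb]
      exact card_rank_border_of_notMem_range hM hb r
  have hW : (#{b | b ∈ W} : ℤ) = Fintype.card K ^ M.rank := by
    rw [← Fintype.card_subtype, ← Nat.card_eq_fintype_card, card_range_vecMulLinear]; push_cast; rfl
  have hWc : (#{b | b ∉ W} : ℤ) = Fintype.card K ^ d - Fintype.card K ^ M.rank := by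
    rw [← hW, eq_sub_iff_add_eq', ← Nat.cast_add, card_filter_add_card_filter_not]
    simp
  have hsplit : #{p : (Fin d → K) × K | (border_s9 M p.1 p.2).rank = r} =
      ∑ b, #{c | (border_s9 M b c).rank = r} := by
    simp only [card_filter, Fintype.sum_prod_type]
  rw [hsplit, Nat.cast_sum, sum_congr rfl fun b _ => hfiber b, sum_ite, sum_const, sum_const,
    nsmul_eq_mul, nsmul_eq_mul, hW, hWc, borderCountPoly]
  split_ifs <;> simp

end Count

theorem card_isSymm_succ {α : Type*} [Fintype α] [DecidableEq α]
    (P : Matrix (Fin (d + 1)) (Fin (d + 1)) α → Prop) [DecidablePred P] :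
    #{M | M.IsSymm ∧ P M} =
      #{x : Matrix (Fin d) (Fin d) α × (Fin d → α) × α |
        x.1.IsSymm ∧ P (border_s9 x.1 x.2.1 x.2.2)} := by
  symm
  refine card_nbij' (fun x => border_s9 x.1 x.2.1 x.2.2)
    (fun M => (M.submatrix Fin.castSucc Fin.castSucc, fun i => M i.castSucc (Fin.last d),
      M (Fin.last d) (Fin.last d))) ?_ ?_ ?_ ?_
  · rintro ⟨N, b, c⟩ hx
    simp only [mem_coe, mem_filter_univ] at hx ⊢
    exact ⟨hx.1.border_s9 b c, hx.2⟩
  · intro M hM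
    simp only [mem_coe, mem_filter_univ] at hM ⊢
    exact ⟨hM.1.submatrix _, by rw [hM.1.border_submatrix_castSucc]; exact hM.2⟩
  · rintro ⟨N, b, c⟩ -
    ext <;> simp
  · intro M hM
    simp only [mem_coe, mem_filter_univ] at hM
    exact hM.1.border_submatrix_castSucc

end Matrix

section

variable {K : Type} [Field K]

theorem rank_stdForm {d r : ℕ} (hr : r ≤ d) : (stdForm K d r).rank = r := by
  classical
  rw [stdForm, rank_diagonal, Fintype.card_subtype]
  simp [Fin.card_filter_val_lt, hr]

theorem C_eq_card [Fintype K] [DecidableEq K] {d₂ r₂ d₁ r₁ : ℕ} (hd : d₁ ≤ d₂) (hr : r₁ ≤ d₁) :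
    C K d₂ r₂ d₁ r₁ = #{M : Matrix (Fin d₂) (Fin d₂) K | M.IsSymm ∧ M.rank = r₂ ∧
      M.submatrix (Fin.castLE hd) (Fin.castLE hd) = stdForm K d₁ r₁} := by
  rw [C, dif_pos ⟨hd, hr⟩, Nat.card_eq_fintype_card, Fintype.card_subtype]

theorem C_self [Fintype K] {d r₁ : ℕ} (hr : r₁ ≤ d) (r : ℕ) :
    C K d r d r₁ = if r = r₁ then 1 else 0 := by
  classical
  rw [C_eq_card le_rfl hr]
  simp only [Fin.castLE_rfl, submatrix_id_id]
  split_ifs with h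
  · subst h
    rw [card_eq_one]
    refine ⟨stdForm K d r, eq_singleton_iff_unique_mem.2 ⟨?_, fun M hM => (mem_filter.1 hM).2.2.2⟩⟩
    exact mem_filter.2 ⟨mem_univ _, isSymm_diagonal _, rank_stdForm hr, rfl⟩
  · rw [card_eq_zero, filter_eq_empty_iff]
    rintro M - ⟨-, hrank, rfl⟩
    exact h (hrank.symm.trans (rank_stdForm hr))

theorem C_succ [Fintype K] {d d₁ r₁ : ℕ} (hd : d₁ ≤ d) (hr : r₁ ≤ d₁) (r : ℕ) :
    (C K (d + 1) r d₁ r₁ : ℤ) = ∑ s ∈ range (d + 1),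
      (C K d s d₁ r₁ : ℤ) * (borderCountPoly d s r).eval (Fintype.card K : ℤ) := by
  classical
  set good : Matrix (Fin d) (Fin d) K → Prop :=
    fun N => N.IsSymm ∧ N.submatrix (Fin.castLE hd) (Fin.castLE hd) = stdForm K d₁ r₁
  have hcard : C K (d + 1) r d₁ r₁ =
      #{x : Matrix (Fin d) (Fin d) K × (Fin d → K) × K |
        good x.1 ∧ (border_s9 x.1 x.2.1 x.2.2).rank = r} := by
    rw [C_eq_card (hd.trans d.le_succ) hr, card_isSymm_succ]
    congr 1
    ext x
    simp only [mem_filter_univ, border_submatrix_castLE _ _ _ hd, good]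
    tauto
  rw [hcard, card_filter_fst_and good fun N (p : (Fin d → K) × K) => (border_s9 N p.1 p.2).rank = r,
    Nat.cast_sum,
    sum_congr rfl fun N hN => card_rank_border (mem_filter_univ N |>.1 hN).1 r,
    ← sum_fiberwise_of_maps_to (g := Matrix.rank) (t := range (d + 1))
      fun N _ => mem_range_succ_iff.2 N.rank_le_width]
  refine sum_congr rfl fun s _ => ?_
  rw [sum_congr rfl fun N hN => by rw [(mem_filter.1 hN).2], sum_const, nsmul_eq_mul,
    C_eq_card hd hr, filter_filter]
  congr 3
  ext N
  simp only [mem_filter_univ, good]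
  tauto

end

/-- For all `0 ≤ r₁ ≤ d₁ ≤ d₂` and `r₂ ≥ 0` there is an integer polynomial `P` with
`C_q(d₂, r₂, d₁, r₁) = P(q)` for every finite field `F_q`. -/
theorem stmt_9 (d₁ d₂ r₁ r₂ : ℕ) (hr : r₁ ≤ d₁) (hd : d₁ ≤ d₂) :
    ∃ P : Polynomial ℤ,
      ∀ (K : Type) [Field K] [Fintype K],
        (C K d₂ r₂ d₁ r₁ : ℤ) = P.eval (Fintype.card K : ℤ) := by
  induction d₂, hd using Nat.le_induction generalizing r₂ with
  | base => exact ⟨if r₂ = r₁ then 1 else 0, fun K _ _ => by rw [C_self hr]; split_ifs <;> simp⟩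
  | succ d hd ih =>
    choose P hP using ih
    refine ⟨∑ s ∈ range (d + 1), P s * borderCountPoly d s r₂, fun K _ _ => ?_⟩
    simp [C_succ hd hr, hP, Polynomial.eval_finsetSum]
end

section
/- Let G be a simple graph, let DG be the graph obtained from G by adding one new isolated vertex, let F_q be a finite field, and let s, r ≥ 0 and k ≥ 1. Then #A_{DG}(s,r,k)(F_q) = q^k · #A_G(s,r,k)(F_q) + (q^s − q^{k−1}) · #A_G(s,r,k−1)(F_q). -/
open scoped Matrix

/-- `A_G(s,r,k)(K)`: pairs `(Q, f)` where `Q` is a symmetric bilinear form on `K^s`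
(a symmetric `s × s` matrix) of rank `r`, `f : V → K^s` is a function whose image spans
a `k`-dimensional subspace, and `Q(f(v), f(w)) = 0` whenever `{v, w}` is an edge of `G`. -/
def AG {V : Type} (G : SimpleGraph V) (K : Type) [Field K] (s r k : ℕ) :
    Set (Matrix (Fin s) (Fin s) K × (V → Fin s → K)) :=
  {p | p.1.IsSymm ∧ p.1.rank = r ∧
    Module.finrank K (Submodule.span K (Set.range p.2)) = k ∧
    ∀ v w, G.Adj v w → p.2 v ⬝ᵥ (p.1 *ᵥ p.2 w) = 0}

/-- `DG`: the simple graph obtained from `G` by adding one new isolated vertex. -/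
def DG {V : Type} (G : SimpleGraph V) : SimpleGraph (Option V) :=
  G.map Function.Embedding.some

open Submodule Module

section Aux

lemma aux_finrank_span_insert_of_not_mem {K M : Type*} [Field K] [AddCommGroup M] [Module K M]
    [FiniteDimensional K M] {S : Set M} {x : M} (hx : x ∉ span K S) :
    finrank K (span K (insert x S)) = finrank K (span K S) + 1 := by
  have hx0 : x ≠ 0 := fun h => hx (h ▸ (span K S).zero_mem)
  have hinf : (K ∙ x) ⊓ span K S = ⊥ := by
    rw [eq_bot_iff]
    rintro y ⟨hy1, hy2⟩
    obtain ⟨c, rfl⟩ := mem_span_singleton.mp hy1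
    rcases eq_or_ne c 0 with rfl | hc
    · simp
    · exact absurd (by simpa [smul_smul, inv_mul_cancel₀ hc] using (span K S).smul_mem c⁻¹ hy2) hx
  have := Submodule.finrank_sup_add_finrank_inf_eq (K ∙ x) (span K S)
  rw [hinf, finrank_bot, finrank_span_singleton hx0] at this
  rw [span_insert]
  omega

lemma aux_range_elim {V M : Type*} (x : M) (f : V → M) :
    Set.range (fun o : Option V => o.elim x f) = insert x (Set.range f) := by
  rw [Option.range_eq]; rfl

lemma aux_adj_some {V : Type} {G : SimpleGraph V} {v w : V} (h : G.Adj v w) :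
    (DG G).Adj (some v) (some w) :=
  (SimpleGraph.map_adj _ _ _ _).mpr ⟨v, w, h, rfl, rfl⟩

lemma aux_card_sigma_const {T : Type*} [Finite T] {F : T → Type*} [∀ p, Finite (F p)] {c : ℕ}
    (h : ∀ p, Nat.card (F p) = c) : Nat.card (Σ p, F p) = Nat.card T * c := by
  classical
  letI := Fintype.ofFinite T
  letI := fun p => Fintype.ofFinite (F p)
  have h' : ∀ p, Fintype.card (F p) = c := fun p => by rw [← Nat.card_eq_fintype_card]; exact h p
  rw [Nat.card_eq_fintype_card, Nat.card_eq_fintype_card, Fintype.card_sigma]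
  simp [h', Finset.sum_const, Finset.card_univ, mul_comm]

lemma aux_card_submodule {K : Type} [Field K] [Fintype K] {s : ℕ}
    (W : Submodule K (Fin s → K)) :
    Nat.card W = Fintype.card K ^ (finrank K W) := by
  classical
  letI : Fintype W := Fintype.ofFinite W
  rw [Nat.card_eq_fintype_card, card_eq_pow_finrank (K := K)]

lemma aux_card_compl_submodule {K : Type} [Field K] [Fintype K] {s : ℕ}
    (W : Submodule K (Fin s → K)) :
    Nat.card {x : Fin s → K // x ∉ W} =
      Fintype.card K ^ s - Fintype.card K ^ (finrank K W) := by
  classical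
  rw [Nat.card_eq_fintype_card, Fintype.card_subtype_compl]
  congr 1
  · rw [Fintype.card_fun, Fintype.card_fin]
  · rw [← Nat.card_eq_fintype_card]
    exact aux_card_submodule W

open Classical in
/-- The splitting bijection. -/
noncomputable def splitEquiv {V : Type} (G : SimpleGraph V) (K : Type) [Field K]
    [Fintype K] (s r k : ℕ) (hk : 1 ≤ k) :
    AG (DG G) K s r k ≃
      (Σ p : AG G K s r k, ↥(span K (Set.range (p.1.2)))) ⊕
      (Σ p : AG G K s r (k - 1), {x : Fin s → K // x ∉ span K (Set.range (p.1.2))}) where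
  toFun := fun ⟨⟨Q, f⟩, hp⟩ =>
    if h : f none ∈ span K (Set.range (f ∘ some)) then
      Sum.inl ⟨⟨(Q, f ∘ some), by
        obtain ⟨h1, h2, h3, h4⟩ := hp
        refine ⟨h1, h2, ?_, fun v w hvw => h4 _ _ (aux_adj_some hvw)⟩
        rw [Option.range_eq, span_insert_eq_span h] at h3
        exact h3⟩, ⟨f none, h⟩⟩
    else
      Sum.inr ⟨⟨(Q, f ∘ some), by
        obtain ⟨h1, h2, h3, h4⟩ := hp
        refine ⟨h1, h2, ?_, fun v w hvw => h4 _ _ (aux_adj_some hvw)⟩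
        rw [Option.range_eq, aux_finrank_span_insert_of_not_mem h] at h3
        show finrank K (span K (Set.range (f ∘ some))) = k - 1
        omega⟩, ⟨f none, h⟩⟩
  invFun q :=
    match q with
    | Sum.inl ⟨⟨(Q, f), hp⟩, ⟨x, hx⟩⟩ =>
      ⟨(Q, fun o => o.elim x f), by
        obtain ⟨h1, h2, h3, h4⟩ := hp
        refine ⟨h1, h2, ?_, ?_⟩
        · rw [aux_range_elim, span_insert_eq_span hx]
          exact h3
        · rintro a b hab
          obtain ⟨v, w, hvw, rfl, rfl⟩ := (SimpleGraph.map_adj _ _ _ _).mp hab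
          exact h4 v w hvw⟩
    | Sum.inr ⟨⟨(Q, f), hp⟩, ⟨x, hx⟩⟩ =>
      ⟨(Q, fun o => o.elim x f), by
        obtain ⟨h1, h2, h3, h4⟩ := hp
        refine ⟨h1, h2, ?_, ?_⟩
        · rw [aux_range_elim, aux_finrank_span_insert_of_not_mem hx, h3]
          omega
        · rintro a b hab
          obtain ⟨v, w, hvw, rfl, rfl⟩ := (SimpleGraph.map_adj _ _ _ _).mp hab
          exact h4 v w hvw⟩
  left_inv p := by
    obtain ⟨⟨Q, f⟩, hp⟩ := p
    have hf : (fun o => Option.elim o (f none) (f ∘ some)) = f := by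
      funext o; cases o <;> rfl
    dsimp only
    by_cases h : f none ∈ span K (Set.range (f ∘ some))
    · rw [dif_pos h]
      exact Subtype.ext (Prod.ext rfl hf)
    · rw [dif_neg h]
      exact Subtype.ext (Prod.ext rfl hf)
  right_inv q := by
    rcases q with ⟨⟨⟨Q, f⟩, hp⟩, ⟨x, hx⟩⟩ | ⟨⟨⟨Q, f⟩, hp⟩, ⟨x, hx⟩⟩
    · dsimp only
      split
      · rfl
      · exact absurd hx (by assumption)
    · dsimp only
      split
      · exact absurd (by assumption) hx
      · rfl

end Aux

/-- For `k ≥ 1`,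
`#A_{DG}(s,r,k) = q^k ⬝ #A_G(s,r,k) + (q^s − q^{k−1}) ⬝ #A_G(s,r,k−1)`. -/
theorem stmt_14 {V : Type} [Fintype V] (G : SimpleGraph V) (K : Type) [Field K]
    [Fintype K] (s r k : ℕ) (hk : 1 ≤ k) :
    (Nat.card (AG (DG G) K s r k) : ℤ) =
      (Fintype.card K : ℤ) ^ k * Nat.card (AG G K s r k) +
        ((Fintype.card K : ℤ) ^ s - (Fintype.card K : ℤ) ^ (k - 1)) *
          Nat.card (AG G K s r (k - 1)) := by
  classical
  set q := Fintype.card K with hq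
  have hcard1 : ∀ p : AG G K s r k, Nat.card ↥(span K (Set.range (p.1.2))) = q ^ k := by
    intro p
    obtain ⟨-, -, h3, -⟩ := p.2
    rw [aux_card_submodule, h3]
  have hcard2 : ∀ p : AG G K s r (k - 1),
      Nat.card {x : Fin s → K // x ∉ span K (Set.range (p.1.2))} = q ^ s - q ^ (k - 1) := by
    intro p
    obtain ⟨-, -, h3, -⟩ := p.2
    rw [aux_card_compl_submodule, h3]
  have hN : Nat.card (AG (DG G) K s r k) =
      Nat.card (AG G K s r k) * q ^ k +
        Nat.card (AG G K s r (k - 1)) * (q ^ s - q ^ (k - 1)) := by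
    rw [Nat.card_congr (splitEquiv G K s r k hk), Nat.card_sum,
      aux_card_sigma_const hcard1, aux_card_sigma_const hcard2]
  rcases Nat.eq_zero_or_pos (Nat.card (AG G K s r (k - 1))) with h0 | hpos
  · rw [h0, Nat.zero_mul, Nat.add_zero] at hN
    rw [hN, h0]
    push_cast
    ring
  · -- the set is nonempty, so k - 1 ≤ s
    have hne : Nonempty (AG G K s r (k - 1)) := Nat.card_pos_iff.mp hpos |>.1
    obtain ⟨p⟩ := hne
    obtain ⟨-, -, h3, -⟩ := p.2
    have hks : k - 1 ≤ s := by
      have := Submodule.finrank_le (span K (Set.range p.1.2))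
      rwa [h3, Module.finrank_fin_fun] at this
    have hqle : q ^ (k - 1) ≤ q ^ s := Nat.pow_le_pow_right Fintype.card_pos hks
    rw [hN]
    push_cast [Nat.cast_sub hqle]
    ring
end

section
/- Let G be a simple graph, v a vertex of G, F_q a finite field, and s ≥ 1. Let I_vG be the graph obtained from G by adding one new vertex w and one new edge {v,w}, and let R_vG be the graph obtained from G by deleting v and all edges incident to v. Then #J_{I_vG}(s)(F_q) = q^{s−1} · ( #J_G(s)(F_q) + (q−1) · #J_{R_vG}(s)(F_q) ). -/
open scoped Matrix

/-- `J_G(s)(K)`: pairs `(Q, f)` where `Q` is a nondegenerate symmetric bilinear form on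
`K^s` (an invertible symmetric `s × s` matrix) and `f : V(G) → K^s` is any function with
`Q(f(v), f(w)) = 0` whenever `{v, w}` is an edge of `G`. -/
def JG {V : Type} (G : SimpleGraph V) (K : Type) [Field K] (s : ℕ) :
    Set (Matrix (Fin s) (Fin s) K × (V → Fin s → K)) :=
  {p | p.1.IsSymm ∧ p.1.det ≠ 0 ∧
    ∀ v w, G.Adj v w → p.2 v ⬝ᵥ (p.1 *ᵥ p.2 w) = 0}

/-- `I_v G`: the graph obtained from `G` by adding one new vertex (`none`) together
with one new edge joining it to `v`. -/
def IvG {V : Type} (G : SimpleGraph V) (v : V) : SimpleGraph (Option V) :=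
  G.map Function.Embedding.some ⊔ SimpleGraph.fromEdgeSet {s(some v, none)}

/-- `R_v G`: the graph obtained from `G` by deleting the vertex `v` and all edges
incident to it. -/
def RvG {V : Type} (G : SimpleGraph V) (v : V) : SimpleGraph {u : V // u ≠ v} :=
  G.induce {u : V | u ≠ v}

lemma dot_swap {K : Type} [Field K] {s : ℕ} {Q : Matrix (Fin s) (Fin s) K} (hQ : Q.IsSymm)
    (x y : Fin s → K) : x ⬝ᵥ (Q *ᵥ y) = y ⬝ᵥ (Q *ᵥ x) := by
  rw [Matrix.dotProduct_mulVec]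
  conv_lhs => rw [← hQ.eq]
  rw [Matrix.vecMul_transpose, dotProduct_comm]

lemma card_sol_zero {K : Type} [Field K] [Fintype K] {s : ℕ}
    (Q : Matrix (Fin s) (Fin s) K) :
    Nat.card {x : Fin s → K // (0 : Fin s → K) ⬝ᵥ (Q *ᵥ x) = 0} = Fintype.card K ^ s := by
  rw [Nat.card_congr (Equiv.subtypeUnivEquiv (fun x => by simp))]
  simp [Nat.card_eq_fintype_card]

lemma card_sol_ne {K : Type} [Field K] [Fintype K] {s : ℕ} (hs : 1 ≤ s)
    (Q : Matrix (Fin s) (Fin s) K) (hdet : Q.det ≠ 0) (c : Fin s → K) (hc : c ≠ 0) :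
    Nat.card {x : Fin s → K // c ⬝ᵥ (Q *ᵥ x) = 0} = Fintype.card K ^ (s - 1) := by
  classical
  let l : (Fin s → K) →ₗ[K] K :=
    { toFun := fun x => c ⬝ᵥ (Q *ᵥ x)
      map_add' := fun a b => by simp [Matrix.mulVec_add, dotProduct_add]
      map_smul' := fun a b => by simp [Matrix.mulVec_smul] }
  have hQunit : IsUnit Q := (Matrix.isUnit_iff_isUnit_det Q).2 (isUnit_iff_ne_zero.2 hdet)
  have hnz : ∃ x, l x ≠ 0 := by
    by_contra h
    push_neg at h
    apply hc
    have h0 : c ᵥ* Q = 0 := by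
      funext i
      have := h (Pi.single i 1)
      simpa [l, Matrix.dotProduct_mulVec, dotProduct_single] using this
    have hinj := Matrix.vecMul_injective_iff_isUnit.2 hQunit
    have : c ᵥ* Q = (0 : Fin s → K) ᵥ* Q := by simpa using h0
    exact hinj this
  have hsurj : Function.Surjective l := by
    obtain ⟨x, hx⟩ := hnz
    intro y
    refine ⟨(y / l x) • x, ?_⟩
    rw [_root_.map_smul, smul_eq_mul, div_mul_cancel₀ _ hx]
  have hcard : Nat.card (Fin s → K) =
      Nat.card ((Fin s → K) ⧸ l.toAddMonoidHom.ker) * Nat.card l.toAddMonoidHom.ker :=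
    AddSubgroup.card_eq_card_quotient_mul_card_addSubgroup _
  have hquot : Nat.card ((Fin s → K) ⧸ l.toAddMonoidHom.ker) = Fintype.card K := by
    have e := QuotientAddGroup.quotientKerEquivOfSurjective l.toAddMonoidHom hsurj
    rw [Nat.card_congr e.toEquiv, Nat.card_eq_fintype_card]
  have hset : Nat.card {x : Fin s → K // c ⬝ᵥ (Q *ᵥ x) = 0} = Nat.card l.toAddMonoidHom.ker := by
    apply Nat.card_congr
    exact Equiv.subtypeEquivRight (fun x => by simp [l, AddMonoidHom.mem_ker])
  have hfull : Nat.card (Fin s → K) = Fintype.card K ^ s := by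
    simp [Nat.card_eq_fintype_card]
  rw [hquot, hfull] at hcard
  have hqpos : 0 < Fintype.card K := Fintype.card_pos
  have hpow : Fintype.card K ^ s = Fintype.card K * Fintype.card K ^ (s - 1) := by
    rw [← pow_succ', Nat.sub_add_cancel hs]
  have h2 : Fintype.card K * Fintype.card K ^ (s - 1) =
      Fintype.card K * Nat.card l.toAddMonoidHom.ker := by rw [← hpow]; exact hcard
  exact hset.trans (Nat.eq_of_mul_eq_mul_left hqpos h2).symm

section equivs
open scoped Classical

variable {V : Type} (G : SimpleGraph V) (v : V) (K : Type) [Field K] (s : ℕ)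

/-- Bijection between `J_{I_vG}` and pairs of an element of `J_G` together with a vector
orthogonal to the value at `v`. -/
noncomputable def eIv : (JG (IvG G v) K s) ≃
    Σ p : (JG G K s),
      {x : Fin s → K // (p : Matrix (Fin s) (Fin s) K × (V → Fin s → K)).2 v ⬝ᵥ
        ((p : Matrix (Fin s) (Fin s) K × (V → Fin s → K)).1 *ᵥ x) = 0} where
  toFun := fun ⟨⟨Q, f⟩, hm⟩ =>
    ⟨⟨(Q, fun u => f (some u)), by
      obtain ⟨h1, h2, h3⟩ := hm
      refine ⟨h1, h2, fun a b hab => ?_⟩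
      refine h3 (some a) (some b) ?_
      rw [IvG, SimpleGraph.sup_adj]
      exact Or.inl ((SimpleGraph.map_adj _ _ _ _).2 ⟨a, b, hab, rfl, rfl⟩)⟩,
     ⟨f none, by
      obtain ⟨h1, h2, h3⟩ := hm
      refine h3 (some v) none ?_
      rw [IvG, SimpleGraph.sup_adj]
      exact Or.inr ((SimpleGraph.fromEdgeSet_adj _).2 ⟨rfl, by simp⟩)⟩⟩
  invFun := fun ⟨⟨⟨Q, g⟩, hm⟩, ⟨x, hx⟩⟩ =>
    ⟨(Q, fun o => o.elim x g), by
      obtain ⟨h1, h2, h3⟩ := hm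
      refine ⟨h1, h2, fun a b hab => ?_⟩
      rw [IvG, SimpleGraph.sup_adj] at hab
      rcases hab with hab | hab
      · rw [SimpleGraph.map_adj] at hab
        obtain ⟨a', b', hab', ha, hb⟩ := hab
        subst ha; subst hb
        exact h3 a' b' hab'
      · rw [SimpleGraph.fromEdgeSet_adj, Set.mem_singleton_iff, Sym2.eq_iff] at hab
        rcases hab.1 with ⟨ha, hb⟩ | ⟨ha, hb⟩
        · subst ha; subst hb; exact hx
        · subst ha; subst hb
          exact (dot_swap h1 _ _).trans hx⟩
  left_inv := by
    rintro ⟨⟨Q, f⟩, hm⟩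
    apply Subtype.ext
    refine Prod.ext rfl ?_
    funext o
    cases o <;> rfl
  right_inv := by
    rintro ⟨⟨⟨Q, g⟩, hm⟩, ⟨x, hx⟩⟩
    rfl

/-- Bijection between the elements of `J_G` vanishing at `v` and `J_{R_vG}`. -/
noncomputable def eRv :
    {p : (JG G K s) // (p : Matrix (Fin s) (Fin s) K × (V → Fin s → K)).2 v = 0} ≃
      (JG (RvG G v) K s) where
  toFun := fun ⟨⟨⟨Q, f⟩, hm⟩, hz⟩ =>
    ⟨(Q, fun u => f u.1), by
      obtain ⟨h1, h2, h3⟩ := hm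
      refine ⟨h1, h2, fun a b hab => ?_⟩
      have hab' : G.Adj a.1 b.1 := by simpa [RvG] using hab
      exact h3 a.1 b.1 hab'⟩
  invFun := fun ⟨⟨Q, g⟩, hm⟩ =>
    ⟨⟨(Q, fun u => if h : u = v then 0 else g ⟨u, h⟩), by
      obtain ⟨h1, h2, h3⟩ := hm
      refine ⟨h1, h2, fun a b hab => ?_⟩
      by_cases ha : a = v
      · simp [ha]
      · by_cases hb : b = v
        · simp [hb, Matrix.mulVec_zero, dotProduct_zero]
        · have h' : (RvG G v).Adj ⟨a, ha⟩ ⟨b, hb⟩ := by simpa [RvG] using hab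
          simpa [ha, hb] using h3 ⟨a, ha⟩ ⟨b, hb⟩ h'⟩,
     by simp⟩
  left_inv := by
    rintro ⟨⟨⟨Q, f⟩, hm⟩, hz⟩
    apply Subtype.ext
    apply Subtype.ext
    refine Prod.ext rfl ?_
    funext u
    by_cases hu : u = v
    · subst hu
      simp only [dif_pos]
      exact hz.symm
    · simp [hu]
  right_inv := by
    rintro ⟨⟨Q, g⟩, hm⟩
    apply Subtype.ext
    refine Prod.ext rfl ?_
    funext u
    show (if h : (u : V) = v then 0 else g ⟨u, h⟩) = g u
    rw [dif_neg u.2]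

end equivs

open scoped Classical in
/-- For `s ≥ 1`,
`#J_{I_vG}(s)(F_q) = q^{s−1} ⬝ (#J_G(s)(F_q) + (q−1) ⬝ #J_{R_vG}(s)(F_q))`. -/
theorem stmt_17 {V : Type} [Fintype V] (G : SimpleGraph V) (v : V)
    (K : Type) [Field K] [Fintype K] (s : ℕ) (hs : 1 ≤ s) :
    Nat.card (JG (IvG G v) K s) =
      (Fintype.card K) ^ (s - 1) *
        (Nat.card (JG G K s) + (Fintype.card K - 1) * Nat.card (JG (RvG G v) K s)) := by
  classical
  set q := Fintype.card K with hqdef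
  letI : Fintype ↥(JG G K s) := Fintype.ofFinite _
  letI : ∀ p : ↥(JG G K s),
      Fintype {x : Fin s → K // (p : Matrix (Fin s) (Fin s) K × (V → Fin s → K)).2 v ⬝ᵥ
        ((p : Matrix (Fin s) (Fin s) K × (V → Fin s → K)).1 *ᵥ x) = 0} :=
    fun p => Fintype.ofFinite _
  rw [Nat.card_congr (eIv G v K s), Nat.card_eq_fintype_card, Fintype.card_sigma]
  have hsum : ∑ p : ↥(JG G K s),
      Fintype.card {x : Fin s → K // (p : Matrix (Fin s) (Fin s) K × (V → Fin s → K)).2 v ⬝ᵥ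
        ((p : Matrix (Fin s) (Fin s) K × (V → Fin s → K)).1 *ᵥ x) = 0} =
      ∑ p : ↥(JG G K s),
        (if (p : Matrix (Fin s) (Fin s) K × (V → Fin s → K)).2 v = 0 then q ^ s
          else q ^ (s - 1)) := by
    refine Finset.sum_congr rfl (fun p _ => ?_)
    obtain ⟨⟨Q, f⟩, hm⟩ := p
    rw [← Nat.card_eq_fintype_card]
    show Nat.card {x : Fin s → K // f v ⬝ᵥ (Q *ᵥ x) = 0} =
      if f v = 0 then q ^ s else q ^ (s - 1)
    by_cases h : f v = 0
    · rw [if_pos h, h, card_sol_zero]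
    · rw [if_neg h, card_sol_ne hs Q hm.2.1 (f v) h]
  rw [hsum, Finset.sum_ite, Finset.sum_const, Finset.sum_const, smul_eq_mul, smul_eq_mul]
  have hA : (Finset.univ.filter (fun p : ↥(JG G K s) =>
      (p : Matrix (Fin s) (Fin s) K × (V → Fin s → K)).2 v = 0)).card =
      Nat.card ↥(JG (RvG G v) K s) := by
    rw [← Fintype.card_subtype, ← Nat.card_eq_fintype_card]
    exact Nat.card_congr (eRv G v K s)
  have hAB := Finset.card_filter_add_card_filter_not (s := Finset.univ)
    (p := fun p : ↥(JG G K s) =>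
      (p : Matrix (Fin s) (Fin s) K × (V → Fin s → K)).2 v = 0)
  rw [Finset.card_univ, ← Nat.card_eq_fintype_card] at hAB
  obtain ⟨r, hr⟩ : ∃ r, q = r + 1 := ⟨q - 1, by have := Fintype.card_pos (α := K); omega⟩
  have hq1 : q - 1 = r := by omega
  have hpow : q ^ s = q ^ (s - 1) * q := by rw [← pow_succ, Nat.sub_add_cancel hs]
  rw [hA, ← hAB, hA, hq1, hpow, hr]
  ring
end

section
/- Let a ∈ ℤ[X] and let s ∈ ℤ[X] be a finite product of polynomials of the form X^n − X with integers n ≥ 2. If for every prime power q the integer s(q) divides a(q), then s divides a in ℤ[X]; that is, the rational function a/s is a polynomial with integer coefficients. -/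
/-!
`s` is monic, and a monic `s ∈ ℤ[X]` dividing `a` at infinitely many integers divides `a`:
the remainder `a %ₘ s` is divisible by `s(x)` at those points but eventually smaller in
absolute value, so it has infinitely many roots. The primes supply the infinitely many points.
-/

open Polynomial

theorem Polynomial.monic_X_pow_sub_X {R : Type*} [CommRing R] {n : ℕ} (hn : 2 ≤ n) :
    (X ^ n - X : R[X]).Monic :=
  monic_X_pow_sub <| degree_X_le.trans_lt <| by exact_mod_cast hn

theorem Polynomial.monic_multiset_prod_X_pow_sub_X {R : Type*} [CommRing R] {l : Multiset ℕ}
    (hl : ∀ n ∈ l, 2 ≤ n) : (l.map fun n => (X : R[X]) ^ n - X).prod.Monic :=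
  monic_multiset_prod_of_monic l _ fun n hn => monic_X_pow_sub_X (hl n hn)

/-- Let `a ∈ ℤ[X]` and let `s ∈ ℤ[X]` be a finite product of polynomials of the form
`X^n − X` with `n ≥ 2`. If `s(q)` divides `a(q)` for every prime power `q`, then `s`
divides `a` in `ℤ[X]`. -/
theorem stmt_19 (a s : Polynomial ℤ)
    (hs : ∃ l : Multiset ℕ, (∀ n ∈ l, 2 ≤ n) ∧
      s = (l.map (fun n => (X : Polynomial ℤ) ^ n - X)).prod)
    (h : ∀ p m : ℕ, p.Prime → 1 ≤ m →
      s.eval ((p : ℤ) ^ m) ∣ a.eval ((p : ℤ) ^ m)) :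
    s ∣ a := by
  obtain ⟨l, hl, rfl⟩ := hs
  refine dvd_of_infinite_eval_dvd_eval (monic_multiset_prod_X_pow_sub_X hl) ?_
  refine (Nat.infinite_setOfPred_prime.image Nat.cast_injective.injOn).mono ?_
  rintro _ ⟨p, hp, rfl⟩
  simpa using h p 1 hp le_rfl
end
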